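/- arXiv:math/0601252 — 4 statements merged into one kernel-verified Lean document; each statement's English description precedes it below -/
import Mathlib

section
/- Lemma 1.1(b): If the line ℝω contains a coroot (an element of R∨), then |R^+| − |R^+_ω| is odd. If ℝω contains no coroot and the map induced by −1 on X/ℝω belongs to the Weyl group W(R_ω) acting on X/ℝω, then |R^+| − |R^+_ω| is even. -/
open Pointwise
open scoped Classical

namespace GKM

variable {V : Type*} [AddCommGroup V] [Module ℝ V]

/-- The dual cone `C* = {λ | λ ≥ 0 on C}` of a subset `C` of `V`. -/
def dualCone (C : Set V) : Set (Module.Dual ℝ V) := {l | ∀ x ∈ C, 0 ≤ l x}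

/-- `C` is a closed convex polyhedral cone: the set of nonnegative linear
combinations of a finite subset of `V`. -/
def IsPolyhedralCone (C : Set V) : Prop :=
  ∃ S : Finset V, C = {x | ∃ c : V → ℝ, (∀ v, 0 ≤ c v) ∧ x = ∑ v ∈ S, c v • v}

/-- `F` is a (closed) face of the cone `C`. -/
def IsFaceOf (F C : Set V) : Prop := ∃ l ∈ dualCone C, F = C ∩ {x | l x = 0}

/-- The dimension of (the linear span of) a subset of `V`. -/
noncomputable def sdim (F : Set V) : ℕ := Module.finrank ℝ (Submodule.span ℝ F)

/-- `ℤ`-valued characteristic function `ξ_S`. -/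
noncomputable def ind {α : Type*} (S : Set α) (a : α) : ℤ := if a ∈ S then 1 else 0

/-- `ψ_C(x,λ) = Σ_{F face of C} (−1)^{dim F} ξ_{(F^⊥)*}(x) · ξ_{F*}(λ)`,
where `(F^⊥)* = C + span F` and `F*` is the dual cone of `F`. -/
noncomputable def psi (C : Set V) (x : V) (l : Module.Dual ℝ V) : ℤ :=
  ∑ᶠ F ∈ {F : Set V | IsFaceOf F C},
    (-1 : ℤ) ^ sdim F * ind (C + (Submodule.span ℝ F : Set V)) x * ind (dualCone F) l

/-- `x` is regular for the hyperplane arrangement `{ker α | α ∈ S}`. -/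
def IsRegular (S : Set (Module.Dual ℝ V)) (x : V) : Prop := ∀ α ∈ S, α x ≠ 0

/-- `C` is a chamber of the arrangement `{ker α | α ∈ S}`: a connected component of
the set of regular points, equivalently (for a finite arrangement, which is the case
throughout) a nonempty maximal subset on which each `α ∈ S` has constant sign. -/
def IsChamber (S : Set (Module.Dual ℝ V)) (C : Set V) : Prop :=
  ∃ x, IsRegular S x ∧ C = {y | ∀ α ∈ S, 0 < α x * α y}

/-- The closure of a chamber, described combinatorially (for a chamber of a finite
hyperplane arrangement this coincides with the topological closure). -/
def chClosure (S : Set (Module.Dual ℝ V)) (C : Set V) : Set V :=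
  {y | ∀ α ∈ S, ∀ x ∈ C, 0 ≤ α x * α y}

/-- The hyperplane `ker α` separates `C₁` and `C₂`. -/
def Separates (α : Module.Dual ℝ V) (C₁ C₂ : Set V) : Prop :=
  ∀ x₁ ∈ C₁, ∀ x₂ ∈ C₂, α x₁ * α x₂ < 0

/-- `l(C₁,C₂)`: the number of hyperplanes of the arrangement separating `C₁`,`C₂`. -/
noncomputable def sep (S : Set (Module.Dual ℝ V)) (C₁ C₂ : Set V) : ℕ :=
  {H : Set V | ∃ α ∈ S, H = {x | α x = 0} ∧ Separates α C₁ C₂}.ncard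

/-- `ε(C₁,C₂) = (−1)^{l(C₁,C₂)}`. -/
noncomputable def eps (S : Set (Module.Dual ℝ V)) (C₁ C₂ : Set V) : ℤ :=
  (-1) ^ sep S C₁ C₂

/-- `ψ_R(C₀,x,λ) = Σ_C ε(C₀,C) ψ_{C̄}(x,λ)`, the sum over all chambers `C`. -/
noncomputable def psiR (S : Set (Module.Dual ℝ V)) (C₀ : Set V) (x : V)
    (l : Module.Dual ℝ V) : ℤ :=
  ∑ᶠ C ∈ {C : Set V | IsChamber S C}, eps S C₀ C * psi (chClosure S C) x l

/-- `λ ∈ X*` is `R`-regular: it vanishes on no nonzero element of a 1-dimensional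
face of the closure of a chamber in `X`. -/
def RRegular (S : Set (Module.Dual ℝ V)) (l : Module.Dual ℝ V) : Prop :=
  ∀ C : Set V, IsChamber S C → ∀ F : Set V, IsFaceOf F (chClosure S C) →
    sdim F = 1 → ∀ ω ∈ F, ω ≠ (0 : V) → l ω ≠ 0

/-- `ω` is a nonzero element of a 1-dimensional face of the closure of `C₀`. -/
def InOneDimFaceOfClosure (S : Set (Module.Dual ℝ V)) (C₀ : Set V) (ω : V) : Prop :=
  ω ≠ 0 ∧ ∃ F : Set V, IsFaceOf F (chClosure S C₀) ∧ sdim F = 1 ∧ ω ∈ F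

/-- `(X, X*, R, R∨)` is a (reduced, crystallographic) root system, `R ⊂ X*`
spanning `X*`, with coroot `α∨ = coroot α ∈ X` for each `α ∈ R`. -/
structure IsRootSystem (R : Set (Module.Dual ℝ V)) (coroot : Module.Dual ℝ V → V) : Prop where
  finite : R.Finite
  ne_zero : ∀ α ∈ R, α ≠ 0
  span_top : Submodule.span ℝ R = ⊤
  root_coroot_two : ∀ α ∈ R, α (coroot α) = 2
  pairing_int : ∀ α ∈ R, ∀ β ∈ R, ∃ n : ℤ, β (coroot α) = (n : ℝ)
  reflect_root_mem : ∀ α ∈ R, ∀ β ∈ R, β - β (coroot α) • α ∈ R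
  reflect_coroot : ∀ α ∈ R, ∀ β ∈ R,
    coroot (β - β (coroot α) • α) = coroot β - α (coroot β) • coroot α
  reduced : ∀ α ∈ R, ∀ c : ℝ, c • α ∈ R → c = 1 ∨ c = -1

/-- The Weyl group `W(R)`, the subgroup of `GL(X)` generated by the reflections
`s_α : x ↦ x − α(x)·α∨`, `α ∈ R`. -/
def weylGroup (R : Set (Module.Dual ℝ V)) (coroot : Module.Dual ℝ V → V) :
    Subgroup (V ≃ₗ[ℝ] V) :=
  Subgroup.closure {w : V ≃ₗ[ℝ] V | ∃ α ∈ R, ∀ x, w x = x - α x • coroot α}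

/-- The set `R⁺` of roots positive on the chamber `C`. -/
def posRoots (R : Set (Module.Dual ℝ V)) (C : Set V) : Set (Module.Dual ℝ V) :=
  {α ∈ R | ∀ x ∈ C, 0 < α x}

/-- The root system `R_ω = {α ∈ R | α(ω) = 0}` viewed on the quotient `X/ℝω`:
the set of functionals on `X/ℝω` whose pullback to `X` lies in `R`
(such a pullback automatically kills `ω`, hence lies in `R_ω`). -/
def quotRoots (R : Set (Module.Dual ℝ V)) (ω : V) :
    Set (Module.Dual ℝ (V ⧸ Submodule.span ℝ ({ω} : Set V))) :=
  {β | β.comp (Submodule.span ℝ ({ω} : Set V)).mkQ ∈ R}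

/-- The root system `R_α` (roots `β` with `α(β∨) = 0`) restricted to the
hyperplane `Y = ker α`. -/
def subRoots (R : Set (Module.Dual ℝ V)) (coroot : Module.Dual ℝ V → V)
    (α : Module.Dual ℝ V) : Set (Module.Dual ℝ ↥(LinearMap.ker α)) :=
  {m | ∃ β ∈ R, α (coroot β) = 0 ∧ m = β.comp (LinearMap.ker α).subtype}

/-!
Since `ω` lies in the closure of `C₀`, a root that does not vanish at `ω` is positive on `C₀`
exactly when it is positive at `ω`; so `|R⁺| − |R⁺_ω|` is the number of roots `β` with
`β ω > 0`. Its parity is computed with an involution of this set. If `α∨ = c • ω` with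
`α ω > 0`, then `β ↦ -s_α β` is such an involution, with `α` as its only fixed point.
If `w ∈ W(R_ω)` acts as `-1` on `X/ℝω`, then `w` fixes `ω` and `β ↦ β ∘ w` is such an
involution; a fixed point `β` would have `w β∨ = β∨`, so that `2β∨ ∈ ℝω`.
-/

theorem _root_.Set.Finite.even_ncard_of_involution {α : Type*} {s : Set α} (hs : s.Finite)
    {σ : α → α} (hσ : Set.MapsTo σ s s) (hinv : ∀ a ∈ s, σ (σ a) = a)
    (hfree : ∀ a ∈ s, σ a ≠ a) : Even s.ncard := by
  rw [← ZMod.natCast_eq_zero_iff_even, Set.ncard_eq_toFinset_card s hs, Finset.card_eq_sum_ones,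
    Nat.cast_sum]
  refine Finset.sum_involution (fun a _ => σ a) (fun _ _ => by decide) ?_ ?_ ?_
  · exact fun a ha _ => hfree a (hs.mem_toFinset.mp ha)
  · exact fun a ha => hs.mem_toFinset.mpr (hσ (hs.mem_toFinset.mp ha))
  · exact fun a ha => hinv a (hs.mem_toFinset.mp ha)

theorem _root_.Set.Finite.odd_ncard_of_involution {α : Type*} {s : Set α} (hs : s.Finite)
    {σ : α → α} (hσ : Set.MapsTo σ s s) (hinv : ∀ a ∈ s, σ (σ a) = a) {a₀ : α} (ha₀ : a₀ ∈ s)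
    (hσa₀ : σ a₀ = a₀) (hfix : ∀ a ∈ s, σ a = a → a = a₀) : Odd s.ncard := by
  have heven : Even (s \ {a₀}).ncard := by
    refine hs.sdiff.even_ncard_of_involution (fun a ha => ⟨hσ ha.1, fun h => ha.2 ?_⟩)
      (fun a ha => hinv a ha.1) (fun a ha h => ha.2 (hfix a ha.1 h))
    rw [Set.mem_singleton_iff, ← hinv a ha.1, Set.mem_singleton_iff.mp h, hσa₀]
  rw [← Set.ncard_sdiff_singleton_add_one ha₀ hs]
  exact heven.add_one

theorem _root_.LinearMap.apply_apply_of_add_mem_span_singleton {w : V →ₗ[ℝ] V} {ω : V}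
    (hwω : w ω = ω) (hw : ∀ x, w x + x ∈ Submodule.span ℝ {ω}) (x : V) : w (w x) = x := by
  obtain ⟨t, ht⟩ := Submodule.mem_span_singleton.mp (hw x)
  have hw' : w (w x) + w x = t • ω := by rw [← map_add, ← ht, map_smul, hwω]
  exact add_right_cancel (hw'.trans (ht.trans (add_comm _ _)))

section

variable {R : Set (Module.Dual ℝ V)} {coroot : Module.Dual ℝ V → V} {C : Set V} {ω : V}

theorem InOneDimFaceOfClosure.mem_chClosure (h : InOneDimFaceOfClosure R C ω) :
    ω ∈ chClosure R C := by
  obtain ⟨-, F, ⟨l, -, rfl⟩, -, hωF⟩ := h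
  exact hωF.1

namespace IsChamber

theorem apply_ne_zero (hC : IsChamber R C) {α : Module.Dual ℝ V} (hα : α ∈ R) {y : V}
    (hy : y ∈ C) : α y ≠ 0 := by
  obtain ⟨x, -, rfl⟩ := hC
  intro h
  simpa [h] using hy α hα

theorem nonempty (hC : IsChamber R C) : C.Nonempty := by
  obtain ⟨x, hx, rfl⟩ := hC
  exact ⟨x, fun α hα => mul_self_pos.mpr (hx α hα)⟩

theorem mem_posRoots_iff (hC : IsChamber R C) (hω : ω ∈ chClosure R C)
    {β : Module.Dual ℝ V} (hβ : β ∈ R) (hβω : β ω ≠ 0) : β ∈ posRoots R C ↔ 0 < β ω := by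
  obtain ⟨x, hx⟩ := hC.nonempty
  refine ⟨fun hpos => ?_, fun hpos => ⟨hβ, fun y hy => ?_⟩⟩
  · exact ((mul_nonneg_iff_of_pos_left (hpos.2 x hx)).mp (hω β hβ x hx)).lt_of_ne' hβω
  · exact ((mul_nonneg_iff_of_pos_right hpos).mp (hω β hβ y hy)).lt_of_ne'
      (hC.apply_ne_zero hβ hy)

theorem ncard_posRoots_sub_ncard_posRoots_ker (hC : IsChamber R C) (hω : ω ∈ chClosure R C)
    (hR : R.Finite) :
    ((posRoots R C).ncard : ℤ) - ({α ∈ R | α ω = 0} ∩ posRoots R C).ncard =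
      {β ∈ R | 0 < β ω}.ncard := by
  have hdiff : posRoots R C \ ({α ∈ R | α ω = 0} ∩ posRoots R C) = {β ∈ R | 0 < β ω} := by
    ext β
    by_cases hβ : β ∈ R
    · by_cases hβω : β ω = 0
      · simp [hβ, hβω]
      · simp [hβ, hβω, hC.mem_posRoots_iff hω hβ hβω]
    · simp [hβ, posRoots]
  have hfin : (posRoots R C).Finite := hR.subset fun _ h => h.1
  rw [← hdiff, Set.ncard_sdiff Set.inter_subset_right (hfin.subset Set.inter_subset_right),
    Nat.cast_sub (Set.ncard_le_ncard Set.inter_subset_right hfin)]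

end IsChamber

theorem weylGroup_le_stabilizer (hω : ∀ α ∈ R, α ω = 0) :
    weylGroup R coroot ≤ MulAction.stabilizer (V ≃ₗ[ℝ] V) ω := by
  refine (Subgroup.closure_le _).mpr ?_
  rintro u ⟨α, hα, hu⟩
  simp [MulAction.mem_stabilizer_iff, LinearEquiv.smul_def, hu, hω α hα]

def PreservesRoots (R : Set (Module.Dual ℝ V)) (coroot : Module.Dual ℝ V → V)
    (u : V ≃ₗ[ℝ] V) : Prop :=
  ∀ β ∈ R, β ∘ₗ (u : V →ₗ[ℝ] V) ∈ R ∧ coroot (β ∘ₗ (u : V →ₗ[ℝ] V)) = u.symm (coroot β)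

theorem PreservesRoots.mul {u v : V ≃ₗ[ℝ] V} (hu : PreservesRoots R coroot u)
    (hv : PreservesRoots R coroot v) : PreservesRoots R coroot (u * v) := by
  intro β hβ
  obtain ⟨hβu, hβu'⟩ := hu β hβ
  obtain ⟨hβuv, hβuv'⟩ := hv _ hβu
  refine ⟨hβuv, ?_⟩
  change coroot ((β ∘ₗ (u : V →ₗ[ℝ] V)) ∘ₗ (v : V →ₗ[ℝ] V)) = v.symm (u.symm (coroot β))
  rw [hβuv', hβu']

namespace IsRootSystem

theorem neg_mem (hR : IsRootSystem R coroot) {α : Module.Dual ℝ V} (hα : α ∈ R) : -α ∈ R := by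
  simpa [hR.root_coroot_two α hα, two_smul] using hR.reflect_root_mem α hα α hα

theorem coroot_neg (hR : IsRootSystem R coroot) {α : Module.Dual ℝ V} (hα : α ∈ R) :
    coroot (-α) = -coroot α := by
  simpa [hR.root_coroot_two α hα, two_smul] using hR.reflect_coroot α hα α hα

theorem reflection_mul_self (hR : IsRootSystem R coroot) {α : Module.Dual ℝ V} (hα : α ∈ R)
    {u : V ≃ₗ[ℝ] V} (hu : ∀ x, u x = x - α x • coroot α) : u * u = 1 := by
  ext x
  change u (u x) = x
  simp only [hu, map_sub, map_smul, hR.root_coroot_two α hα, smul_eq_mul]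
  module

theorem preservesRoots_of_reflection (hR : IsRootSystem R coroot) {α : Module.Dual ℝ V}
    (hα : α ∈ R) {u : V ≃ₗ[ℝ] V} (hu : ∀ x, u x = x - α x • coroot α) :
    PreservesRoots R coroot u := by
  intro β hβ
  have hβu : β ∘ₗ (u : V →ₗ[ℝ] V) = β - β (coroot α) • α := by
    ext x
    simp [hu, mul_comm]
  have hsymm : u.symm = u := inv_eq_of_mul_eq_one_right (hR.reflection_mul_self hα hu)
  refine ⟨hβu ▸ hR.reflect_root_mem α hα β hβ, ?_⟩
  rw [hβu, hR.reflect_coroot α hα β hβ, hsymm, hu]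

theorem preservesRoots_of_mem_weylGroup (hR : IsRootSystem R coroot)
    {R' : Set (Module.Dual ℝ V)} (hR' : R' ⊆ R) {w : V ≃ₗ[ℝ] V}
    (hw : w ∈ weylGroup R' coroot) : PreservesRoots R coroot w := by
  refine Subgroup.closure_induction'' (fun u ⟨α, hα, hu⟩ => ?_) (fun u ⟨α, hα, hu⟩ => ?_)
    (fun β hβ => ⟨hβ, rfl⟩) (fun _ _ _ _ => PreservesRoots.mul) hw
  · exact hR.preservesRoots_of_reflection (hR' hα) hu
  · rw [inv_eq_of_mul_eq_one_right (hR.reflection_mul_self (hR' hα) hu)]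
    exact hR.preservesRoots_of_reflection (hR' hα) hu

theorem odd_ncard_pos_of_coroot_eq_smul (hR : IsRootSystem R coroot) {α : Module.Dual ℝ V}
    (hα : α ∈ R) {c : ℝ} (hc : coroot α = c • ω) : Odd {β ∈ R | 0 < β ω}.ncard := by
  have hcα : c * α ω = 2 := by
    rw [← smul_eq_mul, ← map_smul, ← hc, hR.root_coroot_two α hα]
  wlog hαω : 0 < α ω generalizing α c
  · refine this (hR.neg_mem hα) (c := -c) (by rw [hR.coroot_neg hα, hc, neg_smul]) ?_ ?_ <;>
      simp only [LinearMap.neg_apply]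
    · linarith
    · have hαω' : α ω ≠ 0 := by rintro h; simp [h] at hcα
      exact neg_pos.mpr ((not_lt.mp hαω).lt_of_ne hαω')
  -- `β ↦ -s_α β` keeps the value at `ω`, since `β (coroot α) • α` takes the value `2 β ω` there
  set σ : Module.Dual ℝ V → Module.Dual ℝ V := fun β => β (coroot α) • α - β with hσ
  have hσω (β : Module.Dual ℝ V) : σ β ω = β ω := by
    simp only [hσ, hc, LinearMap.sub_apply, LinearMap.smul_apply, map_smul, smul_eq_mul]
    linear_combination β ω * hcα
  have hσR {β} (hβ : β ∈ R) : σ β ∈ R := by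
    simpa [hσ] using hR.neg_mem (hR.reflect_root_mem α hα β hβ)
  have hσσ (β : Module.Dual ℝ V) : σ (σ β) = β := by
    simp only [hσ, LinearMap.sub_apply, LinearMap.smul_apply, hR.root_coroot_two α hα,
      smul_eq_mul]
    module
  refine (hR.finite.subset (Set.sep_subset _ _)).odd_ncard_of_involution
    (fun β hβ => ⟨hσR hβ.1, (hσω β).symm ▸ hβ.2⟩) (fun β _ => hσσ β) ⟨hα, hαω⟩ ?_
    fun β hβ hfix => ?_
  · simp only [hσ, hR.root_coroot_two α hα]
    module
  have hβα : β = (β (coroot α) / 2) • α := by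
    ext x
    have hx := LinearMap.congr_fun hfix x
    simp only [hσ, LinearMap.sub_apply, LinearMap.smul_apply, smul_eq_mul] at hx ⊢
    linarith
  rcases hR.reduced α hα _ (hβα ▸ hβ.1) with h | h
  · rw [hβα, h, one_smul]
  · have hβω := hβ.2
    rw [hβα, h] at hβω
    simp only [LinearMap.smul_apply, neg_smul, one_smul] at hβω
    linarith

theorem even_ncard_pos_of_mem_weylGroup (hR : IsRootSystem R coroot)
    (hno : ¬ ∃ α ∈ R, ∃ c : ℝ, coroot α = c • ω) {w : V ≃ₗ[ℝ] V}
    (hw : w ∈ weylGroup {α ∈ R | α ω = 0} coroot)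
    (hwneg : ∀ x, w x + x ∈ Submodule.span ℝ {ω}) : Even {β ∈ R | 0 < β ω}.ncard := by
  have hwω : w ω = ω :=
    MulAction.mem_stabilizer_iff.mp (weylGroup_le_stabilizer (fun _ h => h.2) hw)
  have hww := (w : V →ₗ[ℝ] V).apply_apply_of_add_mem_span_singleton hwω hwneg
  have hpres := hR.preservesRoots_of_mem_weylGroup (Set.sep_subset _ _) hw
  refine (hR.finite.subset (Set.sep_subset _ _)).even_ncard_of_involution
    (σ := fun β => β ∘ₗ (w : V →ₗ[ℝ] V)) (fun β hβ => ⟨(hpres β hβ.1).1, ?_⟩)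
    (fun β _ => LinearMap.ext fun x => congrArg β (hww x)) fun β hβ hfix => hno ?_
  · simpa [hwω] using hβ.2
  have hwβ : w (coroot β) = coroot β := by
    have hβ' := (hpres β hβ.1).2
    rw [hfix] at hβ'
    exact w.eq_symm_apply.mp hβ'
  obtain ⟨t, ht⟩ := Submodule.mem_span_singleton.mp (hwneg (coroot β))
  rw [hwβ, ← two_smul ℝ] at ht
  exact ⟨β, hβ.1, t / 2, by rw [div_eq_inv_mul, mul_smul, ht, inv_smul_smul₀ two_ne_zero]⟩

end IsRootSystem

end

theorem lemma_1_1_b_general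
    {V : Type*} [AddCommGroup V] [Module ℝ V]
    (R : Set (Module.Dual ℝ V)) (coroot : Module.Dual ℝ V → V)
    (hRS : IsRootSystem R coroot)
    (C₀ : Set V) (hC₀ : IsChamber R C₀)
    (ω : V) (hωface : InOneDimFaceOfClosure R C₀ ω)
    (Rω RP RPω : Set (Module.Dual ℝ V))
    (hRω : Rω = {α ∈ R | α ω = 0})
    (hRP : RP = posRoots R C₀) (hRPω : RPω = Rω ∩ RP) :
    -- if `ℝω` contains a coroot, the difference is odd
    ((∃ α ∈ R, ∃ c : ℝ, coroot α = c • ω) →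
      Odd ((RP.ncard : ℤ) - (RPω.ncard : ℤ))) ∧
    -- if `ℝω` contains no coroot and `−1_{X/ℝω} ∈ W(R_ω)`, the difference is even
    ((¬ ∃ α ∈ R, ∃ c : ℝ, coroot α = c • ω) →
      (∃ w ∈ weylGroup Rω coroot, ∀ x : V, w x + x ∈ Submodule.span ℝ ({ω} : Set V)) →
      Even ((RP.ncard : ℤ) - (RPω.ncard : ℤ))) := by
  subst hRω hRP hRPω
  rw [hC₀.ncard_posRoots_sub_ncard_posRoots_ker hωface.mem_chClosure hRS.finite]
  refine ⟨fun ⟨α, hα, c, hc⟩ => ?_, fun hno ⟨w, hw, hwneg⟩ => ?_⟩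
  · exact (Int.odd_coe_nat _).mpr (hRS.odd_ncard_pos_of_coroot_eq_smul hα hc)
  · exact (Int.even_coe_nat _).mpr (hRS.even_ncard_pos_of_mem_weylGroup hno hw hwneg)

/-- **Lemma 1.1(b)**: if the line `ℝω` contains a coroot then `|R⁺| − |R⁺_ω|` is odd;
if `ℝω` contains no coroot and `−1` on `X/ℝω` lies in `W(R_ω)` then it is even. -/
theorem lemma_1_1_b
    {V : Type*} [AddCommGroup V] [Module ℝ V] [FiniteDimensional ℝ V]
    (R : Set (Module.Dual ℝ V)) (coroot : Module.Dual ℝ V → V)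
    (hRS : IsRootSystem R coroot)
    (C₀ : Set V) (hC₀ : IsChamber R C₀)
    (ω : V) (hωface : InOneDimFaceOfClosure R C₀ ω)
    (Rω RP RPω : Set (Module.Dual ℝ V))
    (hRω : Rω = {α ∈ R | α ω = 0})
    (hRP : RP = posRoots R C₀) (hRPω : RPω = Rω ∩ RP) :
    -- if `ℝω` contains a coroot, the difference is odd
    ((∃ α ∈ R, ∃ c : ℝ, coroot α = c • ω) →
      Odd ((RP.ncard : ℤ) - (RPω.ncard : ℤ))) ∧
    -- if `ℝω` contains no coroot and `−1_{X/ℝω} ∈ W(R_ω)`, the difference is even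
    ((¬ ∃ α ∈ R, ∃ c : ℝ, coroot α = c • ω) →
      (∃ w ∈ weylGroup Rω coroot, ∀ x : V, w x + x ∈ Submodule.span ℝ ({ω} : Set V)) →
      Even ((RP.ncard : ℤ) - (RPω.ncard : ℤ))) :=
  lemma_1_1_b_general R coroot hRS C₀ hC₀ ω hωface Rω RP RPω hRω hRP hRPω

end GKM
end

section
/- Lemma 1.1(d): Suppose there exists a positive scalar c such that cω is a coroot α∨ ∈ R∨; then the corresponding root α belongs to R^+. If C'' is a chamber in X relative to R such that (1) α takes nonnegative values on C'', (2) ker α is a wall of C'', and (3) C̃'' = C̃₀, then l_R(C₀, C'') = (|R^+| − |R^+_ω| − 1)/2 (the right-hand side being an integer, since |R^+| − |R^+_ω| is odd when ℝω contains a coroot). -/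
/-!
Since `c • ω = α∨`, we have `α ω = 2 / c > 0`, and `ω` lies in the closure of `C₀`, so `α > 0`
on `C₀`.

For the count, take `y` generic on the wall `ker α` of `C''`, so that only `±α` vanish at `y`.
A root `β` with `β ω ≠ 0` (resp. `β y ≠ 0`) has the sign of `β ω` on `C₀` (resp. of `β y` on `C''`);
a root vanishing at `ω` does not separate `C₀` from `C''`, which lie in one `R_ω`-chamber, and
neither does `±α`. Hence `ker β` separates them iff `β ω * β y < 0`. The reflection `s_α` fixes `y`
and negates `ω`, so it exchanges the roots with `β ω * β y < 0` and those with `β ω * β y > 0`;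
together with `±α` these are the roots with `β ω ≠ 0`, of which there are `2 (|R⁺| - |R⁺_ω|)`.
Passing from roots to hyperplanes halves the count: `|R⁺| - |R⁺_ω| = 2 l(C₀, C'') + 1`.
-/

open Pointwise
open scoped Classical

theorem Set.ncard_eq_two_mul_ncard_pos {ι 𝕜 : Type*} [AddCommGroup 𝕜] [LinearOrder 𝕜]
    [IsOrderedAddMonoid 𝕜] {S : Set ι} (hS : S.Finite) {g : ι → ι} (hgS : Set.MapsTo g S S)
    (hgg : ∀ a ∈ S, g (g a) = a) {f : ι → 𝕜} (hfg : ∀ a ∈ S, f (g a) = -f a)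
    (hf : ∀ a ∈ S, f a ≠ 0) : S.ncard = 2 * {a ∈ S | 0 < f a}.ncard := by
  have hinj : Set.InjOn g S := fun a ha b hb hab => by rw [← hgg a ha, hab, hgg b hb]
  have hsplit : S = {a ∈ S | 0 < f a} ∪ {a ∈ S | f a < 0} := by
    ext a
    simp only [Set.mem_union, Set.mem_sep_iff]
    constructor
    · intro ha; rcases (hf a ha).lt_or_gt with h | h <;> tauto
    · rintro (⟨ha, -⟩ | ⟨ha, -⟩) <;> exact ha
  have hdisj : Disjoint {a ∈ S | 0 < f a} {a ∈ S | f a < 0} :=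
    Set.disjoint_left.mpr fun a ha ha' => (ha.2.trans ha'.2).false
  have hle : {a ∈ S | 0 < f a}.ncard ≤ {a ∈ S | f a < 0}.ncard :=
    Set.ncard_le_ncard_of_injOn g (fun a ha => ⟨hgS ha.1, by simpa [hfg a ha.1] using ha.2⟩)
      (hinj.mono fun a ha => ha.1) (hS.subset fun a ha => ha.1)
  have hge : {a ∈ S | f a < 0}.ncard ≤ {a ∈ S | 0 < f a}.ncard :=
    Set.ncard_le_ncard_of_injOn g (fun a ha => ⟨hgS ha.1, by simpa [hfg a ha.1] using ha.2⟩)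
      (hinj.mono fun a ha => ha.1) (hS.subset fun a ha => ha.1)
  conv_lhs => rw [hsplit]
  rw [Set.ncard_union_eq hdisj (hS.subset fun a ha => ha.1) (hS.subset fun a ha => ha.1)]
  omega

theorem ConvexCone.exists_forall_apply_ne_zero {V : Type*} [AddCommGroup V] [Module ℝ V]
    (K : ConvexCone ℝ V) (hK : K.Pointed) {B : Set (Module.Dual ℝ V)} (hB : B.Finite)
    (hBK : ∀ β ∈ B, ∃ x ∈ K, β x ≠ 0) : ∃ y ∈ K, ∀ β ∈ B, β y ≠ 0 := by
  induction B, hB using Set.Finite.induction_on with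
  | empty => exact ⟨0, hK, by simp⟩
  | @insert a s _ hs ih =>
    obtain ⟨y, hyK, hy⟩ := ih fun β hβ => hBK β (Set.mem_insert_of_mem a hβ)
    obtain ⟨x, hxK, hax⟩ := hBK a (Set.mem_insert a s)
    -- `β (y + t • x)` vanishes for at most one `t`, namely `-β y / β x`
    obtain ⟨t, ht, htbad⟩ := ((Set.Ioi_infinite (0 : ℝ)).sdiff
      ((hs.insert a).image fun β => -β y / β x)).nonempty
    refine ⟨y + t • x, K.add_mem hyK (K.smul_mem ht hxK), fun β hβ hzero => htbad ⟨β, hβ, ?_⟩⟩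
    have hβx : β x ≠ 0 := by
      rintro h
      rcases hβ with rfl | hβ
      · exact hax h
      · exact hy β hβ (by simpa [h] using hzero)
    simp only [map_add, map_smul, smul_eq_mul] at hzero
    field_simp
    linarith

theorem LinearMap.exists_smul_eq_of_ker_le {𝕜 V : Type*} [Field 𝕜] [AddCommGroup V] [Module 𝕜 V]
    {f g : V →ₗ[𝕜] 𝕜} (h : LinearMap.ker f ≤ LinearMap.ker g) : ∃ e : 𝕜, e • f = g := by
  have := mem_span_of_iInf_ker_le_ker (L := fun _ : Unit => f) (K := g) (by simpa using h)
  simpa [Set.range_const, Submodule.mem_span_singleton] using this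

namespace GKM

variable {V : Type*} [AddCommGroup V] [Module ℝ V]

def hyperplane (β : Module.Dual ℝ V) : Set V := {x | β x = 0}

theorem sep_eq_ncard_image_hyperplane (S : Set (Module.Dual ℝ V)) (C₀ C : Set V) :
    sep S C₀ C = (hyperplane '' {β ∈ S | Separates β C₀ C}).ncard :=
  congrArg Set.ncard <| Set.ext fun _ =>
    ⟨fun ⟨β, hβ, hH, hsep⟩ => ⟨β, ⟨hβ, hsep⟩, hH.symm⟩,
      fun ⟨β, ⟨hβ, hsep⟩, hH⟩ => ⟨β, hβ, hH.symm, hsep⟩⟩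

theorem IsFaceOf.subset {F C : Set V} (hF : IsFaceOf F C) : F ⊆ C := by
  obtain ⟨l, -, rfl⟩ := hF
  exact Set.inter_subset_left

theorem IsFaceOf.exists_convexCone {F : Set V} {K : ConvexCone ℝ V} (hK : K.Pointed)
    (hF : IsFaceOf F K) : ∃ K' : ConvexCone ℝ V, K'.Pointed ∧ (K' : Set V) = F := by
  obtain ⟨l, -, rfl⟩ := hF
  exact ⟨K ⊓ (LinearMap.ker l).toConvexCone, ⟨hK, by simp⟩, rfl⟩

section Chamber

variable {S : Set (Module.Dual ℝ V)} {C : Set V} {β : Module.Dual ℝ V} {x x' y : V}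

theorem IsChamber.nonempty_s3 (hC : IsChamber S C) : C.Nonempty := by
  obtain ⟨x, hx, rfl⟩ := hC
  exact ⟨x, fun β hβ => mul_self_pos.mpr (hx β hβ)⟩

theorem IsChamber.mul_pos (hC : IsChamber S C) (hβ : β ∈ S) (hx : x ∈ C) (hx' : x' ∈ C) :
    0 < β x * β x' := by
  obtain ⟨z, -, rfl⟩ := hC
  have := mul_pos (hx β hβ) (hx' β hβ)
  nlinarith [sq_nonneg (β z)]

theorem IsChamber.apply_ne_zero_s3 (hC : IsChamber S C) (hβ : β ∈ S) (hx : x ∈ C) : β x ≠ 0 :=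
  fun h => by simpa [h] using hC.mul_pos hβ hx hx

theorem IsChamber.mul_pos_of_mem_chClosure (hC : IsChamber S C) (hβ : β ∈ S) (hx : x ∈ C)
    (hy : y ∈ chClosure S C) (hβy : β y ≠ 0) : 0 < β x * β y :=
  (hy β hβ x hx).lt_of_ne (mul_ne_zero (hC.apply_ne_zero_s3 hβ hx) hβy).symm

theorem IsChamber.mem_posRoots_iff_s3 (hC : IsChamber S C) (hx : x ∈ C) :
    β ∈ posRoots S C ↔ β ∈ S ∧ 0 < β x := by
  refine ⟨fun h => ⟨h.1, h.2 x hx⟩, fun ⟨hβ, hβx⟩ => ⟨hβ, fun x' hx' => ?_⟩⟩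
  exact pos_of_mul_pos_right (hC.mul_pos hβ hx hx') hβx.le

def chClosureCone (S : Set (Module.Dual ℝ V)) (C : Set V) : ConvexCone ℝ V where
  carrier := chClosure S C
  smul_mem' t ht y hy β hβ x hx := by
    simpa [mul_left_comm _ t] using mul_nonneg ht.le (hy β hβ x hx)
  add_mem' y hy z hz β hβ x hx := by
    simpa [mul_add] using add_nonneg (hy β hβ x hx) (hz β hβ x hx)

theorem chClosureCone_pointed : (chClosureCone S C).Pointed := fun β _ x _ => by simp

end Chamber

theorem separates_iff_mul_neg {R : Set (Module.Dual ℝ V)} {C₀ C D : Set V}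
    {α β : Module.Dual ℝ V} {ω y : V}
    (hC₀ : IsChamber R C₀) (hC : IsChamber R C) (hD : IsChamber {γ ∈ R | γ ω = 0} D)
    (hC₀D : C₀ ⊆ D) (hCD : C ⊆ D) (hω : ω ∈ chClosure R C₀) (hy : y ∈ chClosure R C)
    (hαC₀ : ∀ x ∈ C₀, 0 < α x) (hαC : ∀ x ∈ C, 0 < α x)
    (hyR : ∀ γ ∈ R, γ y = 0 → γ = α ∨ γ = -α) (hβ : β ∈ R) :
    Separates β C₀ C ↔ β ω * β y < 0 := by
  constructor
  · intro hsep
    obtain ⟨x₀, hx₀⟩ := hC₀.nonempty_s3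
    obtain ⟨x, hx⟩ := hC.nonempty_s3
    have h := hsep x₀ hx₀ x hx
    have hβω : β ω ≠ 0 := fun h0 =>
      (hD.mul_pos ⟨hβ, h0⟩ (hC₀D hx₀) (hCD hx)).not_gt h
    have hβy : β y ≠ 0 := fun h0 => by
      have hα := mul_pos (hαC₀ x₀ hx₀) (hαC x hx)
      rcases hyR β hβ h0 with rfl | rfl
      · exact hα.not_gt h
      · exact hα.not_gt (by simpa using h)
    have h₀ := hC₀.mul_pos_of_mem_chClosure hβ hx₀ hω hβω
    have h₁ := hC.mul_pos_of_mem_chClosure hβ hx hy hβy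
    nlinarith [mul_pos h₀ h₁]
  · intro hneg x₀ hx₀ x hx
    have h₀ := hC₀.mul_pos_of_mem_chClosure hβ hx₀ hω (left_ne_zero_of_mul hneg.ne)
    have h₁ := hC.mul_pos_of_mem_chClosure hβ hx hy (right_ne_zero_of_mul hneg.ne)
    nlinarith [mul_pos h₀ h₁]

namespace IsRootSystem

variable {R : Set (Module.Dual ℝ V)} {coroot : Module.Dual ℝ V → V}
variable (hR : IsRootSystem R coroot)
include hR

theorem neg_mem_s3 {β : Module.Dual ℝ V} (hβ : β ∈ R) : -β ∈ R := by
  have h := hR.reflect_root_mem β hβ β hβ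
  rwa [hR.root_coroot_two β hβ, two_smul, sub_add_cancel_left] at h

theorem eq_or_eq_neg_of_ker_le {α β : Module.Dual ℝ V} (hα : α ∈ R) (hβ : β ∈ R)
    (h : LinearMap.ker α ≤ LinearMap.ker β) : β = α ∨ β = -α := by
  obtain ⟨e, rfl⟩ := LinearMap.exists_smul_eq_of_ker_le h
  rcases hR.reduced α hα e hβ with rfl | rfl
  · exact Or.inl (one_smul ℝ α)
  · exact Or.inr (neg_one_smul ℝ α)

theorem ncard_eq_two_mul_ncard_inter_posRoots {C : Set V} (hC : IsChamber R C)
    {S : Set (Module.Dual ℝ V)} (hSR : S ⊆ R) (hS : ∀ β ∈ S, -β ∈ S) :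
    S.ncard = 2 * (S ∩ posRoots R C).ncard := by
  obtain ⟨x, hx⟩ := hC.nonempty_s3
  have hpos : S ∩ posRoots R C = {β ∈ S | 0 < β x} := by
    ext β
    simp only [Set.mem_inter_iff, hC.mem_posRoots_iff_s3 hx, Set.mem_sep_iff]
    exact ⟨fun h => ⟨h.1, h.2.2⟩, fun h => ⟨h.1, hSR h.1, h.2⟩⟩
  rw [hpos]
  exact Set.ncard_eq_two_mul_ncard_pos (hR.finite.subset hSR) hS (fun β _ => neg_neg β)
    (fun β _ => LinearMap.neg_apply β x) fun β hβ => hC.apply_ne_zero_s3 (hSR hβ) hx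

theorem ncard_image_hyperplane {C : Set V} (hC : IsChamber R C)
    {S : Set (Module.Dual ℝ V)} (hSR : S ⊆ R) (hS : ∀ β ∈ S, -β ∈ S) :
    (hyperplane '' S).ncard = (S ∩ posRoots R C).ncard := by
  obtain ⟨x, hx⟩ := hC.nonempty_s3
  have himage : hyperplane '' S = hyperplane '' (S ∩ posRoots R C) := by
    refine (Set.image_mono Set.inter_subset_left).antisymm' ?_
    rintro _ ⟨β, hβ, rfl⟩
    rcases (hC.apply_ne_zero_s3 (hSR hβ) hx).lt_or_gt with hneg | hpos
    · refine ⟨-β, ⟨hS β hβ, (hC.mem_posRoots_iff_s3 hx).mpr ⟨hR.neg_mem_s3 (hSR hβ), ?_⟩⟩, ?_⟩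
      · simpa using hneg
      · ext; simp [hyperplane]
    · exact ⟨β, ⟨hβ, (hC.mem_posRoots_iff_s3 hx).mpr ⟨hSR hβ, hpos⟩⟩, rfl⟩
  rw [himage]
  refine Set.InjOn.ncard_image fun β hβ γ hγ hβγ => ?_
  have hle : LinearMap.ker β ≤ LinearMap.ker γ := fun z hz => by
    change z ∈ hyperplane γ
    rw [← hβγ]
    exact hz
  rcases hR.eq_or_eq_neg_of_ker_le (hSR hβ.1) (hSR hγ.1) hle with h | rfl
  · exact h.symm
  · have h₁ := ((hC.mem_posRoots_iff_s3 hx).mp hβ.2).2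
    have h₂ := ((hC.mem_posRoots_iff_s3 hx).mp hγ.2).2
    simp only [LinearMap.neg_apply] at h₂
    linarith

theorem two_mul_ncard_image_hyperplane {C : Set V} (hC : IsChamber R C)
    {S : Set (Module.Dual ℝ V)} (hSR : S ⊆ R) (hS : ∀ β ∈ S, -β ∈ S) :
    2 * (hyperplane '' S).ncard = S.ncard := by
  rw [hR.ncard_image_hyperplane hC hSR hS, hR.ncard_eq_two_mul_ncard_inter_posRoots hC hSR hS]

theorem ncard_apply_ne_zero_eq_two_mul {C : Set V} (hC : IsChamber R C) (ω : V) :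
    ({β ∈ R | β ω ≠ 0}.ncard : ℤ) =
      2 * ((posRoots R C).ncard - ({β ∈ R | β ω = 0} ∩ posRoots R C).ncard) := by
  have hpos : {β ∈ R | β ω ≠ 0} ∩ posRoots R C =
      posRoots R C \ ({β ∈ R | β ω = 0} ∩ posRoots R C) := by
    ext β
    have hβR : β ∈ posRoots R C → β ∈ R := fun h => h.1
    simp only [Set.mem_inter_iff, Set.mem_sdiff, Set.mem_sep_iff]
    tauto
  have hcard := hR.ncard_eq_two_mul_ncard_inter_posRoots hC (S := {β ∈ R | β ω ≠ 0})
    (fun β hβ => hβ.1) fun β hβ => ⟨hR.neg_mem_s3 hβ.1, by simpa using hβ.2⟩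
  have hsdiff := Set.ncard_sdiff_add_ncard_of_subset
    (Set.inter_subset_right (s := {β ∈ R | β ω = 0}))
    (hR.finite.subset fun β (hβ : β ∈ posRoots R C) => hβ.1)
  rw [hpos] at hcard
  omega

theorem ncard_mul_ne_zero_eq_two_mul {α : Module.Dual ℝ V} (hα : α ∈ R) {c : ℝ} {ω : V}
    (hcω : c • ω = coroot α) {y : V} (hαy : α y = 0) :
    {β ∈ R | β ω * β y ≠ 0}.ncard = 2 * {β ∈ R | β ω * β y < 0}.ncard := by
  -- the reflection `s_α`, acting on roots, swaps the signs of `β ω * β y`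
  set r : Module.Dual ℝ V → Module.Dual ℝ V := fun β => β - β (coroot α) • α
  have hcαω : c * α ω = 2 := by
    rw [← hR.root_coroot_two α hα, ← hcω, map_smul, smul_eq_mul]
  have hrω (β : Module.Dual ℝ V) : r β ω = -β ω := by
    simp only [r, LinearMap.sub_apply, LinearMap.smul_apply, smul_eq_mul, ← hcω, map_smul]
    linear_combination (-β ω) * hcαω
  have hry (β : Module.Dual ℝ V) : r β y = β y := by simp [r, hαy]
  have hrr (β : Module.Dual ℝ V) : r (r β) = β := by
    simp only [r, LinearMap.sub_apply, LinearMap.smul_apply, hR.root_coroot_two α hα,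
      smul_eq_mul]
    module
  have key : {β ∈ R | β ω * β y < 0} = {β ∈ {β ∈ R | β ω * β y ≠ 0} | 0 < -(β ω * β y)} := by
    ext β
    simp only [Set.mem_sep_iff, neg_pos]
    exact ⟨fun h => ⟨⟨h.1, h.2.ne⟩, h.2⟩, fun h => ⟨h.1.1, h.2⟩⟩
  rw [key]
  refine Set.ncard_eq_two_mul_ncard_pos (hR.finite.subset fun β hβ => hβ.1) ?_
    (fun β _ => hrr β) (fun β _ => ?_) fun β hβ => neg_ne_zero.mpr hβ.2
  · rintro β ⟨hβ, hβ0⟩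
    exact ⟨hR.reflect_root_mem α hα β hβ, by simpa [hrω, hry] using hβ0⟩
  · simp only [hrω, hry]
    ring

theorem exists_mem_chClosure_forall_eq_or_eq_neg {α : Module.Dual ℝ V} (hα : α ∈ R)
    {C F : Set V} (hF : IsFaceOf F (chClosure R C))
    (hspan : (Submodule.span ℝ F : Set V) = {x | α x = 0}) :
    ∃ y ∈ chClosure R C, α y = 0 ∧ ∀ β ∈ R, β y = 0 → β = α ∨ β = -α := by
  have hker (β : Module.Dual ℝ V) (hβ : ∀ x ∈ F, β x = 0) :
      LinearMap.ker α ≤ LinearMap.ker β := fun z hz => by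
    have hzF : z ∈ Submodule.span ℝ F := by
      rw [← SetLike.mem_coe, hspan]
      exact hz
    exact Submodule.span_le.mpr (fun x hx => LinearMap.mem_ker.mpr (hβ x hx)) hzF
  obtain ⟨K, hK, rfl⟩ := hF.exists_convexCone (K := chClosureCone R C) chClosureCone_pointed
  obtain ⟨y, hyK, hy⟩ := K.exists_forall_apply_ne_zero hK (B := R \ {α, -α}) hR.finite.sdiff
    fun β ⟨hβ, hβα⟩ => by
      by_contra! h
      exact hβα (hR.eq_or_eq_neg_of_ker_le hα hβ (hker β h))
  refine ⟨y, hF.subset hyK, ?_, fun β hβ hβy => ?_⟩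
  · have hy_span : y ∈ (Submodule.span ℝ (K : Set V) : Set V) := Submodule.subset_span hyK
    rwa [hspan] at hy_span
  · by_contra h
    exact hy β ⟨hβ, h⟩ hβy

theorem ncard_apply_ne_zero_eq_add_two {α : Module.Dual ℝ V} (hα : α ∈ R) {ω y : V}
    (hαω : α ω ≠ 0) (hαy : α y = 0)
    (hy : ∀ β ∈ R, β y = 0 → β = α ∨ β = -α) :
    {β ∈ R | β ω ≠ 0}.ncard = {β ∈ R | β ω * β y ≠ 0}.ncard + 2 := by
  have hsplit : {β ∈ R | β ω ≠ 0} = {β ∈ R | β ω * β y ≠ 0} ∪ {α, -α} := by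
    ext β
    simp only [Set.mem_union, Set.mem_sep_iff, Set.mem_insert_iff, Set.mem_singleton_iff,
      mul_ne_zero_iff]
    constructor
    · rintro ⟨hβ, hβω⟩
      by_cases hβy : β y = 0
      · exact Or.inr (hy β hβ hβy)
      · exact Or.inl ⟨hβ, hβω, hβy⟩
    · rintro (⟨hβ, hβω, -⟩ | rfl | rfl)
      · exact ⟨hβ, hβω⟩
      · exact ⟨hα, hαω⟩
      · exact ⟨hR.neg_mem_s3 hα, by simpa using hαω⟩
  have hdisj : Disjoint {β ∈ R | β ω * β y ≠ 0} {α, -α} := by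
    refine Set.disjoint_left.mpr fun β hβ hβα => ?_
    rcases hβα with rfl | rfl <;> simp [hαy] at hβ
  have hα_ne : α ≠ -α := fun h =>
    hαω (by linarith [LinearMap.congr_fun h ω, LinearMap.neg_apply α ω])
  rw [hsplit, Set.ncard_union_eq hdisj (hR.finite.subset fun β hβ => hβ.1),
    Set.ncard_pair hα_ne]

end IsRootSystem

theorem lemma_1_1_d_general
    {V : Type*} [AddCommGroup V] [Module ℝ V]
    (R : Set (Module.Dual ℝ V)) (coroot : Module.Dual ℝ V → V)
    (hRS : IsRootSystem R coroot)
    (C₀ : Set V) (hC₀ : IsChamber R C₀)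
    (ω : V) (hωface : InOneDimFaceOfClosure R C₀ ω)
    (Rω RP RPω : Set (Module.Dual ℝ V))
    (hRω : Rω = {α ∈ R | α ω = 0})
    (hRP : RP = posRoots R C₀) (hRPω : RPω = Rω ∩ RP)
    (c : ℝ) (hc : 0 < c) (α : Module.Dual ℝ V) (hα : α ∈ R)
    (hcω : c • ω = coroot α) :
    -- the root `α` corresponding to the coroot `α∨ = cω` is positive
    α ∈ RP ∧
    -- and for every chamber `C''` satisfying conditions (1), (2), (3):
    (∀ C'' : Set V, IsChamber R C'' →
      -- (1) `α` takes nonnegative values on `C''`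
      (∀ x ∈ C'', 0 ≤ α x) →
      -- (2) `ker α` is a wall of `C''`
      (∃ F : Set V, IsFaceOf F (chClosure R C'') ∧
          (Submodule.span ℝ F : Set V) = {x | α x = 0}) →
      -- (3) `C̃'' = C̃₀`
      (∃ D : Set V, IsChamber Rω D ∧ C'' ⊆ D ∧ C₀ ⊆ D) →
      -- conclusion: `l(C₀,C'') = (|R⁺| − |R⁺_ω| − 1)/2`
      2 * (sep R C₀ C'' : ℤ) = (RP.ncard : ℤ) - (RPω.ncard : ℤ) - 1) := by
  obtain ⟨-, F₀, hF₀, -, hωF₀⟩ := hωface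
  have hω : ω ∈ chClosure R C₀ := hF₀.subset hωF₀
  have hαω : 0 < α ω := by
    have h := hRS.root_coroot_two α hα
    rw [← hcω, map_smul, smul_eq_mul] at h
    exact pos_of_mul_pos_right (h ▸ two_pos) hc.le
  have hαC₀ (x : V) (hx : x ∈ C₀) : 0 < α x :=
    pos_of_mul_pos_left (hC₀.mul_pos_of_mem_chClosure hα hx hω hαω.ne') hαω.le
  subst hRω hRP hRPω
  refine ⟨⟨hα, hαC₀⟩, ?_⟩
  rintro C'' hC'' hαC'' ⟨F, hF, hspan⟩ ⟨D, hD, hC''D, hC₀D⟩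
  obtain ⟨y, hy, hαy, hyR⟩ := hRS.exists_mem_chClosure_forall_eq_or_eq_neg hα hF hspan
  have hαC''_pos (x : V) (hx : x ∈ C'') : 0 < α x :=
    (hαC'' x hx).lt_of_ne (hC''.apply_ne_zero_s3 hα hx).symm
  have hsep : {β ∈ R | Separates β C₀ C''} = {β ∈ R | β ω * β y < 0} :=
    Set.ext fun β => and_congr_right
      (separates_iff_mul_neg hC₀ hC'' hD hC₀D hC''D hω hy hαC₀ hαC''_pos hyR)
  have h₁ : 2 * sep R C₀ C'' = {β ∈ R | β ω * β y < 0}.ncard := by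
    rw [sep_eq_ncard_image_hyperplane, hsep]
    exact hRS.two_mul_ncard_image_hyperplane hC₀ (fun β hβ => hβ.1)
      fun β hβ => ⟨hRS.neg_mem_s3 hβ.1, by simpa using hβ.2⟩
  have h₂ := hRS.ncard_mul_ne_zero_eq_two_mul hα hcω hαy
  have h₃ := hRS.ncard_apply_ne_zero_eq_add_two hα hαω.ne' hαy hyR
  have h₄ := hRS.ncard_apply_ne_zero_eq_two_mul hC₀ ω
  omega

/-- **Lemma 1.1(d)**: if `cω` is a coroot `α∨` (`c > 0`), then `α ∈ R⁺`, and for any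
chamber `C''` on which `α` is nonnegative, having `ker α` as a wall and with
`C̃'' = C̃₀`, one has `l(C₀,C'') = (|R⁺| − |R⁺_ω| − 1)/2`. -/
theorem lemma_1_1_d
    {V : Type*} [AddCommGroup V] [Module ℝ V] [FiniteDimensional ℝ V]
    (R : Set (Module.Dual ℝ V)) (coroot : Module.Dual ℝ V → V)
    (hRS : IsRootSystem R coroot)
    (C₀ : Set V) (hC₀ : IsChamber R C₀)
    (ω : V) (hωface : InOneDimFaceOfClosure R C₀ ω)
    (Rω RP RPω : Set (Module.Dual ℝ V))
    (hRω : Rω = {α ∈ R | α ω = 0})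
    (hRP : RP = posRoots R C₀) (hRPω : RPω = Rω ∩ RP)
    (c : ℝ) (hc : 0 < c) (α : Module.Dual ℝ V) (hα : α ∈ R)
    (hcω : c • ω = coroot α) :
    -- the root `α` corresponding to the coroot `α∨ = cω` is positive
    α ∈ RP ∧
    -- and for every chamber `C''` satisfying conditions (1), (2), (3):
    (∀ C'' : Set V, IsChamber R C'' →
      -- (1) `α` takes nonnegative values on `C''`
      (∀ x ∈ C'', 0 ≤ α x) →
      -- (2) `ker α` is a wall of `C''`
      (∃ F : Set V, IsFaceOf F (chClosure R C'') ∧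
          (Submodule.span ℝ F : Set V) = {x | α x = 0}) →
      -- (3) `C̃'' = C̃₀`
      (∃ D : Set V, IsChamber Rω D ∧ C'' ⊆ D ∧ C₀ ⊆ D) →
      -- conclusion: `l(C₀,C'') = (|R⁺| − |R⁺_ω| − 1)/2`
      2 * (sep R C₀ C'' : ℤ) = (RP.ncard : ℤ) - (RPω.ncard : ℤ) - 1) :=
  lemma_1_1_d_general R coroot hRS C₀ hC₀ ω hωface Rω RP RPω hRω hRP hRPω c hc α hα hcω

end GKM
end

section
/- Lemma A.1: Let X = ℝⁿ, C = (ℝ_{≥0})ⁿ, and identify X* with ℝⁿ via the standard pairing. For x = (x₁,…,xₙ) and λ = (λ₁,…,λₙ) in ℝⁿ put I_x := {i : xᵢ ≥ 0} and I_λ := {i : λᵢ ≥ 0}. Then ψ_C(x,λ) = 0 unless I_x and I_λ are complementary subsets of {1,…,n}, in which case ψ_C(x,λ) = (−1)^{|I_λ|}, where |I_λ| denotes the cardinality of I_λ. -/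
open Pointwise
open scoped Classical

/-! The faces of the orthant `C = ℝ≥0ⁿ` are the coordinate faces
`F_J = {v ∈ C | vᵢ = 0 for i ∉ J}`, one for each `J ⊆ {1,…,n}`; they satisfy `dim F_J = |J|`,
`C + span F_J = {v | vᵢ ≥ 0 for i ∉ J}` and `F_J* = {λ | λᵢ ≥ 0 for i ∈ J}`.
Hence `ψ_C(x,λ)` is the alternating sum `Σ (-1)^|J|` over the Boolean interval
`I_xᶜ ⊆ J ⊆ I_λ`, which vanishes unless the interval is the single point `I_xᶜ = I_λ`. -/

open Finset in
theorem Finset.sum_Icc_neg_one_pow_card {α : Type*} [DecidableEq α] (s t : Finset α) :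
    ∑ u ∈ Icc s t, (-1 : ℤ) ^ u.card = if s = t then (-1) ^ t.card else 0 := by
  by_cases hst : s ⊆ t
  · have hdisj : ∀ u ∈ (t \ s).powerset, Disjoint s u := fun u hu =>
      disjoint_of_subset_right (mem_powerset.1 hu) disjoint_sdiff
    have hinj : Set.InjOn (s ∪ ·) ((t \ s).powerset : Set (Finset α)) := fun u hu v hv huv => by
      simp only at huv
      rw [← union_sdiff_cancel_left (hdisj u hu), huv, union_sdiff_cancel_left (hdisj v hv)]
    rw [Icc_eq_image_powerset hst, sum_image hinj,
      sum_congr rfl fun u hu => by rw [card_union_of_disjoint (hdisj u hu), pow_add],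
      ← mul_sum, sum_powerset_neg_one_pow_card]
    simp only [sdiff_eq_empty_iff_subset]
    by_cases hts : t ⊆ s
    · rw [Subset.antisymm hst hts]
      simp
    · rw [if_neg hts, if_neg fun (h : s = t) => hts (h ▸ subset_refl _), mul_zero]
  · rw [Icc_eq_empty hst, sum_empty, if_neg fun (h : s = t) => hst (h ▸ subset_refl _)]

theorem Module.Dual.pi_apply_eq_sum_mul_single {R ι : Type*} [CommSemiring R] [Fintype ι]
    [DecidableEq ι] (f : Module.Dual R (ι → R)) (v : ι → R) :
    f v = ∑ i, v i * f (Pi.single i 1) := by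
  rw [LinearMap.pi_apply_eq_sum_univ]
  refine Finset.sum_congr rfl fun i _ => ?_
  rw [smul_eq_mul]
  congr 2
  ext j
  simp [Pi.single_apply, eq_comm]

namespace GKM

section Orthant

variable {ι : Type*} [Fintype ι] [DecidableEq ι]

def orthant (ι : Type*) : Set (ι → ℝ) := {v | ∀ i, 0 ≤ v i}

def orthantFace (J : Finset ι) : Set (ι → ℝ) := {v | (∀ i, 0 ≤ v i) ∧ ∀ i ∉ J, v i = 0}

omit [Fintype ι] in
theorem single_mem_orthantFace_iff {J : Finset ι} {i : ι} :
    Pi.single i (1 : ℝ) ∈ orthantFace J ↔ i ∈ J := by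
  refine ⟨fun h => ?_, fun hi => ⟨fun j => ?_, fun j hj => ?_⟩⟩
  · by_contra hi
    simpa using h.2 i hi
  · by_cases hj : j = i <;> simp [hj]
  · simp [show j ≠ i from fun h => hj (h ▸ hi)]

omit [Fintype ι] in
theorem orthantFace_injective : Function.Injective (orthantFace (ι := ι)) := fun J K h => by
  ext i
  rw [← single_mem_orthantFace_iff, h, single_mem_orthantFace_iff]

theorem orthant_inter_ker_eq_orthantFace {L : Module.Dual ℝ (ι → ℝ)}
    (hL : L ∈ dualCone (orthant ι)) :
    orthant ι ∩ {v | L v = 0} = orthantFace {i | L (Pi.single i 1) = 0} := by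
  have hLe : ∀ i, 0 ≤ L (Pi.single i 1) := fun i =>
    hL _ (single_mem_orthantFace_iff.2 (Finset.mem_univ i)).1
  ext v
  simp only [orthant, orthantFace, Set.mem_inter_iff, Set.mem_ofPred_eq,
    Module.Dual.pi_apply_eq_sum_mul_single L v, Finset.mem_filter, Finset.mem_univ, true_and]
  refine and_congr_right fun hv => ?_
  rw [Finset.sum_eq_zero_iff_of_nonneg fun i _ => mul_nonneg (hv i) (hLe i)]
  simp only [Finset.mem_univ, true_imp_iff, mul_eq_zero, or_iff_not_imp_right]

theorem orthantFace_isFaceOf (J : Finset ι) : IsFaceOf (orthantFace J) (orthant ι) := by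
  refine ⟨∑ i ∈ Jᶜ, LinearMap.proj i, fun v hv => ?_, ?_⟩
  · simpa using Finset.sum_nonneg fun i _ => hv i
  · ext v
    simp only [orthant, orthantFace, Set.mem_inter_iff, Set.mem_ofPred_eq, LinearMap.coe_sum,
      Finset.sum_apply, LinearMap.proj_apply]
    refine and_congr_right fun hv => ?_
    rw [Finset.sum_eq_zero_iff_of_nonneg fun i _ => hv i]
    simp

theorem isFaceOf_orthant_iff {F : Set (ι → ℝ)} :
    IsFaceOf F (orthant ι) ↔ F ∈ Set.range (orthantFace (ι := ι)) := by
  constructor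
  · rintro ⟨L, hL, rfl⟩
    exact ⟨_, (orthant_inter_ker_eq_orthantFace hL).symm⟩
  · rintro ⟨J, rfl⟩
    exact orthantFace_isFaceOf J

theorem span_orthantFace (J : Finset ι) :
    Submodule.span ℝ (orthantFace J) = Pi.spanSubset ℝ (J : Set ι) := by
  refine le_antisymm (Submodule.span_le.2 fun v hv => Pi.mem_spanSubset_iff.2 hv.2) ?_
  refine Submodule.span_le.2 ?_
  rintro _ ⟨i, hi, rfl⟩
  exact Submodule.subset_span (by simpa using single_mem_orthantFace_iff.2 hi)

theorem sdim_orthantFace (J : Finset ι) : sdim (orthantFace J) = J.card := by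
  rw [sdim, span_orthantFace, Pi.dim_spanSubset, Set.ncard_coe_finset]

theorem orthant_add_span_orthantFace (J : Finset ι) :
    orthant ι + (Submodule.span ℝ (orthantFace J) : Set (ι → ℝ)) = {v | ∀ i ∉ J, 0 ≤ v i} := by
  ext v
  simp only [Set.mem_add, SetLike.mem_coe, span_orthantFace, Pi.mem_spanSubset_iff,
    Set.mem_ofPred_eq]
  constructor
  · rintro ⟨c, hc, w, hw, rfl⟩ i hi
    simpa [hw i hi] using hc i
  · intro hv
    refine ⟨v⁺, fun i => posPart_nonneg (v i), -v⁻, fun i hi => ?_,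
      by rw [← sub_eq_add_neg, posPart_sub_negPart]⟩
    rw [Pi.neg_apply, neg_eq_zero, show v⁻ i = (v i)⁻ from rfl, negPart_eq_zero]
    exact hv i hi

theorem dualCone_orthantFace (J : Finset ι) :
    dualCone (orthantFace J) = {L | ∀ i ∈ J, 0 ≤ L (Pi.single i 1)} := by
  ext L
  refine ⟨fun hL i hi => hL _ (single_mem_orthantFace_iff.2 hi), fun hL v hv => ?_⟩
  rw [Module.Dual.pi_apply_eq_sum_mul_single]
  refine Finset.sum_nonneg fun i _ => ?_
  by_cases hi : i ∈ J
  · exact mul_nonneg (hv.1 i) (hL i hi)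
  · simp [hv.2 i hi]

theorem psi_orthant (x : ι → ℝ) (L : Module.Dual ℝ (ι → ℝ)) :
    psi (orthant ι) x L =
      if {i | 0 ≤ L (Pi.single i 1)} = {i | 0 ≤ x i}ᶜ then
        (-1) ^ {i | 0 ≤ L (Pi.single i 1)}.ncard
      else 0 := by
  set B := {i | 0 ≤ L (Pi.single i 1)}.toFinset
  set D := ({i | 0 ≤ x i}ᶜ).toFinset
  have hterm : ∀ J : Finset ι, (-1 : ℤ) ^ sdim (orthantFace J) *
      ind (orthant ι + (Submodule.span ℝ (orthantFace J) : Set (ι → ℝ))) x *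
      ind (dualCone (orthantFace J)) L = if J ∈ Finset.Icc D B then (-1) ^ J.card else 0 := by
    intro J
    rw [sdim_orthantFace, orthant_add_span_orthantFace, dualCone_orthantFace]
    have hx : (∀ i ∉ J, 0 ≤ x i) ↔ D ⊆ J := by
      simp only [D, Finset.subset_iff, Set.mem_toFinset, Set.mem_compl_iff, Set.mem_ofPred_eq]
      exact forall_congr' fun _ => not_imp_comm
    have hL : (∀ i ∈ J, 0 ≤ L (Pi.single i 1)) ↔ J ⊆ B := by simp [B, Finset.subset_iff]
    simp only [ind, Set.mem_ofPred_eq, hx, hL, Finset.mem_Icc]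
    split_ifs <;> simp_all
  have hfaces : {F | IsFaceOf F (orthant ι)} = Set.range orthantFace :=
    Set.ext fun _ => isFaceOf_orthant_iff
  rw [psi, hfaces, finsum_mem_range orthantFace_injective, finsum_eq_sum_of_fintype]
  simp only [hterm, Finset.sum_ite_mem, Finset.univ_inter, Finset.sum_Icc_neg_one_pow_card]
  refine if_congr (Set.toFinset_inj.trans eq_comm) ?_ rfl
  rw [Set.ncard_eq_toFinset_card']

end Orthant

/-- **Lemma A.1**: for `X = ℝⁿ` and `C = (ℝ_{≥0})ⁿ`, with `X*` identified with `ℝⁿ`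
via the standard pairing, `ψ_C(x,λ) = 0` unless `I_x = {i | xᵢ ≥ 0}` and
`I_λ = {i | λᵢ ≥ 0}` are complementary, in which case `ψ_C(x,λ) = (−1)^{|I_λ|}`. -/
theorem lemma_A_1 (n : ℕ) (x l : Fin n → ℝ)
    (L : Module.Dual ℝ (Fin n → ℝ)) (hL : ∀ v : Fin n → ℝ, L v = ∑ i, l i * v i) :
    psi {v : Fin n → ℝ | ∀ i, 0 ≤ v i} x L =
      if {i : Fin n | 0 ≤ l i} = {i : Fin n | 0 ≤ x i}ᶜ then
        (-1) ^ ({i : Fin n | 0 ≤ l i}).ncard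
      else 0 := by
  have hLl : ∀ i, L (Pi.single i 1) = l i := fun i => by simp [hL, Pi.single_apply]
  exact (psi_orthant x L).trans (by simp only [hLl])

end GKM
end

section
/- Corollary A.3: Assume dim C = dim C* = dim X. Let λ, λ' be C*-regular elements of X* lying in adjacent chambers (for C*) separated only by the wall Z of C*. Let ω ∈ C be a nonzero element of the 1-dimensional face (C* ∩ Z)⊥ of C corresponding to the facet C* ∩ Z of C*, and assume λ(ω) > 0 and λ'(ω) < 0. Put X̃ := X/ℝω and let C̃ be the image of C under the canonical surjection X → X̃; then Z is the dual space of X̃ and C̃ is the closed convex polyhedral cone (C* ∩ Z)* in X̃ dual to the cone C* ∩ Z in Z. Then for every x ∈ X: ψ_C(x,λ) − ψ_C(x,λ') = −ψ_{C̃}(x̃, λ̃), where x̃ is the image of x in X̃ and λ̃ is the unique point of Z lying on the segment joining λ and λ'. -/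
open Pointwise
open scoped Classical

namespace GKM

variable {V : Type*} [AddCommGroup V] [Module ℝ V]

/-! ### Auxiliary development for Corollary A.3 -/

section CorA3Aux

variable {V : Type*} [AddCommGroup V] [Module ℝ V]

/-- The cone generated by a finite set. -/
def coneS (S : Finset V) : Set V :=
  {x | ∃ c : V → ℝ, (∀ v, 0 ≤ c v) ∧ x = ∑ v ∈ S, c v • v}

lemma mem_coneS_of_mem {S : Finset V} {w : V} (hw : w ∈ S) : w ∈ coneS S := by
  refine ⟨fun v => if v = w then 1 else 0, fun v => by dsimp; split <;> norm_num, ?_⟩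
  have h : ∀ v ∈ S, (if v = w then (1:ℝ) else 0) • v = if v = w then v else 0 := by
    intro v _; split <;> simp
  rw [Finset.sum_congr rfl h, Finset.sum_ite_eq' S w (fun v => v), if_pos hw]

lemma zero_mem_coneS (S : Finset V) : (0:V) ∈ coneS S :=
  ⟨fun _ => 0, fun _ => le_refl 0, by simp⟩

lemma smul_mem_coneS {S : Finset V} {x : V} (hx : x ∈ coneS S) {a : ℝ} (ha : 0 ≤ a) :
    a • x ∈ coneS S := by
  obtain ⟨c, hc, rfl⟩ := hx
  exact ⟨fun v => a * c v, fun v => mul_nonneg ha (hc v), by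
    rw [Finset.smul_sum]; exact Finset.sum_congr rfl fun v _ => (mul_smul a (c v) v).symm⟩

lemma coneS_subset_span {S : Finset V} {x : V} (hx : x ∈ coneS S) :
    x ∈ Submodule.span ℝ (S : Set V) := by
  obtain ⟨c, _, rfl⟩ := hx
  exact Submodule.sum_smul_mem _ c fun v hv => Submodule.subset_span hv

lemma span_coneS (S : Finset V) :
    Submodule.span ℝ (coneS S) = Submodule.span ℝ (S : Set V) := by
  apply le_antisymm
  · rw [Submodule.span_le]; exact fun x hx => coneS_subset_span hx
  · exact Submodule.span_mono fun w hw => mem_coneS_of_mem hw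

/-- Evaluation of a functional which is nonnegative on generators. -/
lemma coneS_nonneg {S : Finset V} {l : Module.Dual ℝ V} (hl : ∀ w ∈ S, 0 ≤ l w)
    {x : V} (hx : x ∈ coneS S) : 0 ≤ l x := by
  obtain ⟨c, hc, rfl⟩ := hx
  rw [map_sum]
  exact Finset.sum_nonneg fun v hv => by
    rw [map_smul, smul_eq_mul]; exact mul_nonneg (hc v) (hl v hv)

lemma coneS_eval_zero {S : Finset V} {l : Module.Dual ℝ V} (hl : ∀ w ∈ S, l w = 0)
    {x : V} (hx : x ∈ coneS S) : l x = 0 := by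
  obtain ⟨c, hc, rfl⟩ := hx
  rw [map_sum]
  exact Finset.sum_eq_zero fun v hv => by rw [map_smul, smul_eq_mul, hl v hv, mul_zero]

lemma mem_dualCone_coneS {S : Finset V} {l : Module.Dual ℝ V} :
    l ∈ dualCone (coneS S) ↔ ∀ w ∈ S, 0 ≤ l w :=
  ⟨fun h w hw => h w (mem_coneS_of_mem hw), fun h x hx => coneS_nonneg h hx⟩

/-- The face cut out by `l` is the cone on the generators killed by `l`. -/
lemma coneS_face_eq {S : Finset V} {l : Module.Dual ℝ V} (hl : l ∈ dualCone (coneS S)) :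
    coneS S ∩ {x | l x = 0} = coneS (S.filter fun w => l w = 0) := by
  rw [mem_dualCone_coneS] at hl
  ext x
  constructor
  · rintro ⟨⟨c, hc, rfl⟩, hx0⟩
    have hx0' : ∑ v ∈ S, c v * l v = 0 := by
      simpa [map_sum, map_smul, smul_eq_mul] using hx0
    have hterm : ∀ v ∈ S, c v * l v = 0 :=
      (Finset.sum_eq_zero_iff_of_nonneg fun v hv =>
        mul_nonneg (hc v) (hl v hv)).mp hx0'
    refine ⟨c, hc, ?_⟩
    rw [Finset.sum_filter_of_ne]
    intro v hv hne
    by_contra h0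
    have : c v = 0 := by
      have := hterm v hv
      rcases mul_eq_zero.mp this with h | h
      · exact h
      · exact absurd h h0
    exact hne (by rw [this, zero_smul])
  · rintro ⟨c, hc, rfl⟩
    constructor
    · refine ⟨fun v => if l v = 0 then c v else 0,
        fun v => by dsimp; split; exacts [hc v, le_refl 0], ?_⟩
      rw [eq_comm, ← Finset.sum_filter_of_ne (p := fun w => l w = 0)
        (f := fun v => (if l v = 0 then c v else 0) • v)]
      · apply Finset.sum_congr rfl
        intro v hv
        have hv0 : l v = 0 := (Finset.mem_filter.mp hv).2
        simp [hv0]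
      · intro v hv hne
        by_contra h0
        rw [if_neg h0, zero_smul] at hne
        exact hne rfl
    · have : ∀ w ∈ S.filter (fun w => l w = 0), l w = 0 := fun w hw =>
        (Finset.mem_filter.mp hw).2
      exact coneS_eval_zero this ⟨c, hc, rfl⟩

lemma isFaceOf_coneS_iff {S : Finset V} {F : Set V} :
    IsFaceOf F (coneS S) ↔
      ∃ l ∈ dualCone (coneS S), F = coneS (S.filter fun w => l w = 0) := by
  constructor
  · rintro ⟨l, hl, rfl⟩
    exact ⟨l, hl, coneS_face_eq hl⟩
  · rintro ⟨l, hl, rfl⟩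
    exact ⟨l, hl, (coneS_face_eq hl).symm⟩

lemma faces_finite (S : Finset V) : {F : Set V | IsFaceOf F (coneS S)}.Finite := by
  have : {F : Set V | IsFaceOf F (coneS S)} ⊆
      (fun T : Finset V => coneS T) '' (S.powerset : Finset (Finset V)) := by
    intro F hF
    obtain ⟨l, hl, rfl⟩ := isFaceOf_coneS_iff.mp hF
    refine ⟨S.filter fun w => l w = 0, ?_, rfl⟩
    rw [Finset.mem_coe, Finset.mem_powerset]
    exact Finset.filter_subset _ S
  exact Set.Finite.subset (Set.Finite.image _ (S.powerset).finite_toSet) this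

/-- Membership of a face (as a subset of the cone). -/
lemma face_subset {S : Finset V} {F : Set V} (hF : IsFaceOf F (coneS S)) :
    F ⊆ coneS S := by
  obtain ⟨l, hl, rfl⟩ := hF; exact Set.inter_subset_left

section FD

variable [FiniteDimensional ℝ V]

lemma exists_pos_functional {C : Set V}
    (hspan : Submodule.span ℝ (dualCone C) = ⊤) :
    ∃ p : Module.Dual ℝ V, p ∈ dualCone C ∧ ∀ x ∈ C, x ≠ 0 → 0 < p x := by
  obtain ⟨b, hbsub, hbspan, hbli⟩ := exists_linearIndependent ℝ (dualCone C)
  have hbfin : b.Finite := hbli.setFinite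
  refine ⟨∑ m ∈ hbfin.toFinset, m, ?_, ?_⟩
  · intro x hx
    simp only [LinearMap.coe_sum, Finset.sum_apply]
    exact Finset.sum_nonneg fun m hm => (hbsub (hbfin.mem_toFinset.mp hm)) x hx
  · intro x hx hx0
    have hnn : ∀ m ∈ hbfin.toFinset, 0 ≤ m x := fun m hm =>
      (hbsub (hbfin.mem_toFinset.mp hm)) x hx
    have hval : (∑ m ∈ hbfin.toFinset, m) x = ∑ m ∈ hbfin.toFinset, m x := by
      simp only [LinearMap.coe_sum, Finset.sum_apply]
    rcases (Finset.sum_nonneg hnn).lt_or_eq with h | h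
    · rw [hval]; exact h
    · exfalso
      have hzero : ∀ m ∈ hbfin.toFinset, m x = 0 :=
        (Finset.sum_eq_zero_iff_of_nonneg hnn).mp h.symm
      apply hx0
      rw [← Module.forall_dual_apply_eq_zero_iff ℝ x]
      intro f
      have hmem : f ∈ Submodule.span ℝ b := by rw [hbspan, hspan]; trivial
      have hle : Submodule.span ℝ b ≤ LinearMap.ker (Module.Dual.eval ℝ V x) := by
        rw [Submodule.span_le]
        intro g hg
        simp only [SetLike.mem_coe, LinearMap.mem_ker]
        exact hzero g (hbfin.mem_toFinset.mpr hg)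
      simpa using hle hmem

lemma exists_dual_vanish {a b : V} (h : b ∉ Submodule.span ℝ ({a} : Set V)) :
    ∃ f : Module.Dual ℝ V, f a = 0 ∧ f b = 1 := by
  set Q := Submodule.span ℝ ({a} : Set V) with hQ
  have hb : Q.mkQ b ≠ 0 := by
    simpa [Submodule.Quotient.mk_eq_zero] using h
  obtain ⟨g, hg⟩ : ∃ g : Module.Dual ℝ (V ⧸ Q), g (Q.mkQ b) ≠ 0 := by
    by_contra hcon; push_neg at hcon
    exact hb ((Module.forall_dual_apply_eq_zero_iff ℝ _).mp hcon)
  refine ⟨(g (Q.mkQ b))⁻¹ • (g.comp Q.mkQ), ?_, ?_⟩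
  · have ha : Q.mkQ a = 0 := by
      simp [Submodule.Quotient.mk_eq_zero, hQ, Submodule.mem_span_singleton_self]
    simp [ha]
  · simp only [LinearMap.smul_apply, LinearMap.comp_apply, smul_eq_mul]
    exact inv_mul_cancel₀ hg

lemma finrank_hyperplane {u : V} (hu : u ≠ 0) :
    Module.finrank ℝ (LinearMap.ker (Module.Dual.eval ℝ V u)) =
      Module.finrank ℝ V - 1 := by
  obtain ⟨f, hf⟩ : ∃ f : Module.Dual ℝ V, f u ≠ 0 := by
    by_contra hcon; push_neg at hcon
    exact hu ((Module.forall_dual_apply_eq_zero_iff ℝ u).mp hcon)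
  have hsurj : Function.Surjective (Module.Dual.eval ℝ V u) := by
    intro r
    refine ⟨(r / f u) • f, ?_⟩
    simp [Module.Dual.eval_apply, div_mul_cancel₀ r hf]
  have hrange : LinearMap.range (Module.Dual.eval ℝ V u) = ⊤ :=
    LinearMap.range_eq_top.mpr hsurj
  have hrn := LinearMap.finrank_range_add_finrank_ker (Module.Dual.eval ℝ V u)
  rw [hrange] at hrn
  have h1 : Module.finrank ℝ (⊤ : Submodule ℝ ℝ) = 1 := by
    simp [Module.finrank_self]
  have h2 : Module.finrank ℝ (Module.Dual ℝ V) = Module.finrank ℝ V :=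
    Subspace.dual_finrank_eq
  omega

end FD

lemma exists_scale {S : Finset V} (l m : Module.Dual ℝ V)
    (h0 : ∀ w ∈ S, l w = 0 → 0 ≤ m w) :
    ∃ k : ℝ, 0 ≤ k ∧ ∀ w ∈ S, 0 < l w → 0 < k * l w + m w := by
  refine ⟨1 + ∑ w ∈ S, max 0 (-(m w) / l w), ?_, ?_⟩
  · have : 0 ≤ ∑ w ∈ S, max 0 (-(m w) / l w) :=
      Finset.sum_nonneg fun w _ => le_max_left 0 _
    linarith
  · intro w hw hlw
    have h1 : max 0 (-(m w) / l w) ≤ ∑ v ∈ S, max 0 (-(m v) / l v) :=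
      Finset.single_le_sum (f := fun v => max (0:ℝ) (-(m v) / l v))
        (fun v _ => le_max_left 0 _) hw
    have h2 : -(m w) / l w ≤ max 0 (-(m w) / l w) := le_max_right 0 _
    have hk : 1 + (-(m w) / l w) ≤ 1 + ∑ v ∈ S, max 0 (-(m v) / l v) := by linarith
    have := mul_le_mul_of_nonneg_right hk hlw.le
    rw [add_mul, one_mul, div_mul_cancel₀ _ (ne_of_gt hlw)] at this
    linarith

lemma face_of_face {S : Finset V} {l : Module.Dual ℝ V} (hl : l ∈ dualCone (coneS S))
    (m : Module.Dual ℝ V) (hm : ∀ y ∈ coneS S, l y = 0 → 0 ≤ m y) :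
    ∃ l₂ ∈ dualCone (coneS S),
      coneS S ∩ {x | l₂ x = 0} = (coneS S ∩ {x | l x = 0}) ∩ {x | m x = 0} := by
  obtain ⟨k, hk0, hk⟩ := exists_scale l m
    (fun w hw h0 => hm w (mem_coneS_of_mem hw) h0)
  have hl' := mem_dualCone_coneS.mp hl
  have hmem : (k • l + m) ∈ dualCone (coneS S) := by
    rw [mem_dualCone_coneS]
    intro w hw
    rcases (hl' w hw).lt_or_eq with h | h
    · exact (hk w hw h).le
    · have hmw : 0 ≤ m w := hm w (mem_coneS_of_mem hw) h.symm
      simp only [LinearMap.add_apply, LinearMap.smul_apply, smul_eq_mul, ← h]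
      linarith
  refine ⟨k • l + m, hmem, ?_⟩
  have hgen : ∀ w ∈ S.filter (fun w => (k • l + m) w = 0), l w = 0 ∧ m w = 0 := by
    intro w hw
    obtain ⟨hwS, hw0⟩ := Finset.mem_filter.mp hw
    simp only [LinearMap.add_apply, LinearMap.smul_apply, smul_eq_mul] at hw0
    rcases (hl' w hwS).lt_or_eq with h | h
    · exfalso
      have := hk w hwS h
      linarith
    · constructor
      · exact h.symm
      · rw [← h] at hw0; linarith
  ext x
  constructor
  · rintro ⟨hxC, hx2⟩
    have hx' : x ∈ coneS (S.filter fun w => (k • l + m) w = 0) := by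
      rw [← coneS_face_eq hmem]; exact ⟨hxC, hx2⟩
    exact ⟨⟨hxC, coneS_eval_zero (fun w hw => (hgen w hw).1) hx'⟩,
      coneS_eval_zero (fun w hw => (hgen w hw).2) hx'⟩
  · rintro ⟨⟨hxC, hxl⟩, hxm⟩
    refine ⟨hxC, ?_⟩
    simp only [Set.mem_setOf_eq] at hxl hxm ⊢
    simp [hxl, hxm]

/-- `u` spans an extreme ray (edge) of `C`, cut out by `l''`. -/
def EdgeData (C : Set V) (u : V) (l'' : Module.Dual ℝ V) : Prop :=
  u ∈ C ∧ u ≠ 0 ∧ l'' ∈ dualCone C ∧ l'' u = 0 ∧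
    ∀ y ∈ C, l'' y = 0 → ∃ c : ℝ, 0 ≤ c ∧ y = c • u

lemma facet_isFaceOf {S : Finset V} {u : V} (huC : u ∈ coneS S) :
    IsFaceOf (dualCone (coneS S) ∩ {m : Module.Dual ℝ V | m u = 0})
      (dualCone (coneS S)) := by
  refine ⟨Module.Dual.eval ℝ V u, fun m hm => hm u huC, ?_⟩
  ext m; simp [Module.Dual.eval_apply]

lemma edge_span_facet [FiniteDimensional ℝ V] {S : Finset V} {u : V}
    {l'' : Module.Dual ℝ V} (hE : EdgeData (coneS S) u l'') :
    Submodule.span ℝ (dualCone (coneS S) ∩ {m : Module.Dual ℝ V | m u = 0}) =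
      LinearMap.ker (Module.Dual.eval ℝ V u) := by
  obtain ⟨huC, hu0, hl''C, hl''u, hray⟩ := hE
  apply le_antisymm
  · rw [Submodule.span_le]
    rintro m ⟨_, hmu⟩
    simpa [Module.Dual.eval_apply] using hmu
  · intro m hm
    have hmu : m u = 0 := by simpa [Module.Dual.eval_apply] using hm
    have hmw0 : ∀ w ∈ S, l'' w = 0 → m w = 0 := by
      intro w hw h0
      obtain ⟨c, _, hc⟩ := hray w (mem_coneS_of_mem hw) h0
      rw [hc, map_smul, smul_eq_mul, hmu, mul_zero]
    obtain ⟨k, hk0, hk⟩ := exists_scale l'' m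
      (fun w hw h0 => le_of_eq (hmw0 w hw h0).symm)
    have hl'' := mem_dualCone_coneS.mp hl''C
    have h1 : (k • l'' + m) ∈ dualCone (coneS S) ∩ {m : Module.Dual ℝ V | m u = 0} := by
      constructor
      · rw [mem_dualCone_coneS]
        intro w hw
        rcases (hl'' w hw).lt_or_eq with h | h
        · exact (hk w hw h).le
        · have := hmw0 w hw h.symm
          simp only [LinearMap.add_apply, LinearMap.smul_apply, smul_eq_mul, ← h, this]
          linarith
      · simp only [Set.mem_setOf_eq, LinearMap.add_apply, LinearMap.smul_apply,
          smul_eq_mul, hl''u, hmu]; ring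
    have h2 : (k • l'') ∈ dualCone (coneS S) ∩ {m : Module.Dual ℝ V | m u = 0} := by
      constructor
      · intro x hx
        simp only [LinearMap.smul_apply, smul_eq_mul]
        exact mul_nonneg hk0 (hl''C x hx)
      · simp only [Set.mem_setOf_eq, LinearMap.smul_apply, smul_eq_mul, hl''u, mul_zero]
    have : m = (k • l'' + m) - (k • l'') := by rw [add_sub_cancel_left]
    rw [this]
    exact Submodule.sub_mem _ (Submodule.subset_span h1) (Submodule.subset_span h2)

lemma facet_sdim [FiniteDimensional ℝ V] {S : Finset V} {u : V}
    {l'' : Module.Dual ℝ V} (hE : EdgeData (coneS S) u l'') :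
    sdim (dualCone (coneS S) ∩ {m : Module.Dual ℝ V | m u = 0}) =
      Module.finrank ℝ V - 1 := by
  unfold sdim
  rw [edge_span_facet hE, finrank_hyperplane hE.2.1]

lemma exists_nonzero_gen {T : Finset V} {x : V} (hx : x ∈ coneS T) (hx0 : x ≠ 0) :
    ∃ w ∈ T, w ≠ 0 := by
  by_contra hcon; push_neg at hcon
  obtain ⟨c, _, rfl⟩ := hx
  exact hx0 (Finset.sum_eq_zero fun v hv => by rw [hcon v hv, smul_zero])

lemma ratio_cut [FiniteDimensional ℝ V] {S : Finset V} {p : Module.Dual ℝ V}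
    (hp : ∀ x ∈ coneS S, x ≠ 0 → 0 < p x)
    {m : Module.Dual ℝ V} (hm : m ∈ dualCone (coneS S))
    {a b : V} (ha : a ∈ S) (ha0 : a ≠ 0) (hma : m a = 0)
    (hb : b ∈ S) (hmb : m b = 0) (hab : b ∉ Submodule.span ℝ ({a} : Set V)) :
    ∃ m' ∈ dualCone (coneS S),
      (coneS S ∩ {x | m' x = 0} ⊆ coneS S ∩ {x | m x = 0}) ∧
      (∃ w₁ ∈ S, w₁ ≠ 0 ∧ m' w₁ = 0 ∧ ∀ c : ℝ, w₁ ≠ c • a) ∧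
      sdim (coneS S ∩ {x | m' x = 0}) < sdim (coneS S ∩ {x | m x = 0}) := by
  classical
  obtain ⟨f, hfa, hfb⟩ := exists_dual_vanish hab
  set q : Module.Dual ℝ V := p - f with hq
  have hb0 : b ≠ 0 := fun h => hab (h ▸ Submodule.zero_mem _)
  set T : Finset V := S.filter (fun w => m w = 0 ∧ w ≠ 0) with hT
  have haT : a ∈ T := by simp [hT, ha, hma, ha0]
  have hbT : b ∈ T := by simp [hT, hb, hmb, hb0]
  have hTpos : ∀ w ∈ T, 0 < p w := by
    intro w hw
    obtain ⟨hwS, _, hw0⟩ := by simpa [hT] using hw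
    exact hp w (mem_coneS_of_mem hwS) hw0
  set rmin : ℝ := T.inf' ⟨a, haT⟩ (fun w => q w / p w) with hrmin
  obtain ⟨w₁, hw₁T, hw₁min⟩ := Finset.exists_mem_eq_inf' ⟨a, haT⟩ (fun w => q w / p w)
  set l' : Module.Dual ℝ V := q - rmin • p with hl'
  have hl'T : ∀ w ∈ T, 0 ≤ l' w := by
    intro w hw
    have h1 : rmin ≤ q w / p w := Finset.inf'_le _ hw
    have h2 : rmin * p w ≤ q w := (le_div_iff₀ (hTpos w hw)).mp h1
    simp only [hl', LinearMap.sub_apply, LinearMap.smul_apply, smul_eq_mul]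
    linarith
  have hratio_a : q a / p a = 1 := by
    have hpa := hTpos a haT
    rw [hq]; simp only [LinearMap.sub_apply, hfa, sub_zero]
    exact div_self (ne_of_gt hpa)
  have hratio_b : q b / p b < 1 := by
    have hpb := hTpos b hbT
    rw [hq]; simp only [LinearMap.sub_apply, hfb]
    rw [div_lt_one hpb]; linarith
  have hrmin_lt : rmin < 1 := lt_of_le_of_lt (Finset.inf'_le _ hbT) hratio_b
  have hl'a : 0 < l' a := by
    have hpa := hTpos a haT
    have : q a = p a := by rw [hq]; simp [hfa]
    simp only [hl', LinearMap.sub_apply, LinearMap.smul_apply, smul_eq_mul, this]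
    nlinarith
  have hl'w₁ : l' w₁ = 0 := by
    have hpw₁ := hTpos w₁ hw₁T
    have : q w₁ = rmin * p w₁ := by
      rw [hrmin, hw₁min, div_mul_cancel₀ _ (ne_of_gt hpw₁)]
    simp only [hl', LinearMap.sub_apply, LinearMap.smul_apply, smul_eq_mul, this, sub_self]
  have hl'face : ∀ y ∈ coneS S, m y = 0 → 0 ≤ l' y := by
    intro y hy hmy
    have hy' : y ∈ coneS (S.filter fun w => m w = 0) := by
      rw [← coneS_face_eq hm]; exact ⟨hy, hmy⟩
    refine coneS_nonneg ?_ hy'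
    intro w hw
    obtain ⟨hwS, hwm⟩ := Finset.mem_filter.mp hw
    by_cases hw0 : w = 0
    · rw [hw0]; simp
    · exact hl'T w (by simp [hT, hwS, hwm, hw0])
  obtain ⟨l₂, hl₂C, hl₂eq⟩ := face_of_face hm l' hl'face
  have hw₁S : w₁ ∈ S := (Finset.mem_filter.mp (by rwa [hT] at hw₁T)).1
  obtain ⟨_, hw₁m, hw₁0⟩ := by simpa [hT] using hw₁T
  refine ⟨l₂, hl₂C, ?_, ⟨w₁, hw₁S, hw₁0, ?_, ?_⟩, ?_⟩
  · rw [hl₂eq]; exact Set.inter_subset_left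
  · -- l₂ w₁ = 0
    have : w₁ ∈ coneS S ∩ {x | l₂ x = 0} := by
      rw [hl₂eq]
      exact ⟨⟨mem_coneS_of_mem hw₁S, hw₁m⟩, hl'w₁⟩
    exact this.2
  · -- w₁ is not a multiple of a
    intro c hc
    have hc0 : c ≠ 0 := by rintro rfl; rw [zero_smul] at hc; exact hw₁0 hc
    have : l' w₁ = c * l' a := by rw [hc, map_smul, smul_eq_mul]
    rw [hl'w₁] at this
    have := this.symm
    rcases mul_eq_zero.mp this with h | h
    · exact hc0 h
    · exact (ne_of_gt hl'a) h
  · -- dimension decrease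
    apply Submodule.finrank_lt_finrank_of_lt
    rw [SetLike.lt_iff_le_and_exists]
    constructor
    · apply Submodule.span_mono
      rw [hl₂eq]; exact Set.inter_subset_left
    · refine ⟨a, Submodule.subset_span ⟨mem_coneS_of_mem ha, hma⟩, ?_⟩
      intro hmem
      have hle : Submodule.span ℝ (coneS S ∩ {x | l₂ x = 0}) ≤ LinearMap.ker l' := by
        rw [Submodule.span_le, hl₂eq]
        rintro x ⟨_, hx⟩
        exact hx
      exact (ne_of_gt hl'a) (hle hmem)

lemma edge_avoid [FiniteDimensional ℝ V] {S : Finset V} {p : Module.Dual ℝ V}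
    (hp : ∀ x ∈ coneS S, x ≠ 0 → 0 < p x) (z : V) :
    ∀ (n : ℕ) (m : Module.Dual ℝ V), m ∈ dualCone (coneS S) →
      sdim (coneS S ∩ {x | m x = 0}) ≤ n →
      ∀ w' ∈ S, w' ∉ Submodule.span ℝ ({z} : Set V) → m w' = 0 →
      ∃ u l'', EdgeData (coneS S) u l'' ∧ m u = 0 ∧
        u ∉ Submodule.span ℝ ({z} : Set V) := by
  classical
  intro n
  induction n with
  | zero =>
    intro m hm hd w' hw' hwz hmw'
    exfalso
    have hw0 : w' ≠ 0 := fun h => hwz (h ▸ Submodule.zero_mem _)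
    have hmem : w' ∈ coneS S ∩ {x | m x = 0} := ⟨mem_coneS_of_mem hw', hmw'⟩
    have hbot : Submodule.span ℝ (coneS S ∩ {x | m x = 0}) = ⊥ := by
      have : sdim (coneS S ∩ {x | m x = 0}) = 0 := Nat.le_zero.mp hd
      unfold sdim at this
      exact Submodule.finrank_eq_zero.mp this
    have := Submodule.subset_span (R := ℝ) hmem
    rw [hbot] at this
    exact hw0 (by simpa using this)
  | succ n IH =>
    intro m hm hd w' hw' hwz hmw'
    have hw0 : w' ≠ 0 := fun h => hwz (h ▸ Submodule.zero_mem _)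
    by_cases hall : ∀ w ∈ S, m w = 0 → ∃ c : ℝ, w = c • w'
    · -- all generators of the face lie on the ray through `w'`.
      refine ⟨w', m, ⟨mem_coneS_of_mem hw', hw0, hm, hmw', ?_⟩, hmw', hwz⟩
      intro y hy hmy
      have hgen : ∀ w ∈ S.filter (fun w => m w = 0), ∃ c : ℝ, 0 ≤ c ∧ w = c • w' := by
        intro w hw
        obtain ⟨hwS, hwm⟩ := Finset.mem_filter.mp hw
        obtain ⟨c, hc⟩ := hall w hwS hwm
        rcases le_or_gt 0 c with h | h
        · exact ⟨c, h, hc⟩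
        · exfalso
          have hcw0 : w ≠ 0 := by
            intro h0
            rw [h0] at hc
            rcases smul_eq_zero.mp hc.symm with h' | h'
            · exact (ne_of_lt h) h'
            · exact hw0 h'
          have hpw : 0 < p w := hp w (mem_coneS_of_mem hwS) hcw0
          have hpw' : 0 < p w' := hp w' (mem_coneS_of_mem hw') hw0
          rw [hc, map_smul, smul_eq_mul] at hpw
          nlinarith
      have hy' : y ∈ coneS (S.filter fun w => m w = 0) := by
        rw [← coneS_face_eq hm]; exact ⟨hy, hmy⟩
      obtain ⟨c, hc, rfl⟩ := hy'
      choose d hd0 hdw using hgen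
      refine ⟨∑ w ∈ (S.filter fun w => m w = 0).attach, c w * d w w.2, ?_, ?_⟩
      · exact Finset.sum_nonneg fun w _ => mul_nonneg (hc w) (hd0 w w.2)
      · rw [Finset.sum_smul, ← Finset.sum_attach (S.filter fun w => m w = 0)
          (fun w => c w • w)]
        apply Finset.sum_congr rfl
        intro w _
        rw [mul_smul, ← hdw w w.2]
    · push_neg at hall
      obtain ⟨b, hbS, hmb, hbw'⟩ := hall
      by_cases hz2 : ∃ a ∈ S, m a = 0 ∧ a ≠ 0 ∧ a ∈ Submodule.span ℝ ({z} : Set V)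
      · obtain ⟨a, haS, hma, ha0, haz⟩ := hz2
        have hab : w' ∉ Submodule.span ℝ ({a} : Set V) := by
          intro hmem
          obtain ⟨c, hc⟩ := Submodule.mem_span_singleton.mp hmem
          obtain ⟨c₀, hc₀⟩ := Submodule.mem_span_singleton.mp haz
          exact hwz (Submodule.mem_span_singleton.mpr
            ⟨c * c₀, by rw [mul_smul, hc₀, hc]⟩)
        obtain ⟨m', hm', hsub, ⟨w₁, hw₁S, hw₁0, hw₁m', hw₁a⟩, hlt⟩ :=
          ratio_cut hp hm haS ha0 hma hw' hmw' hab
        have hw₁z : w₁ ∉ Submodule.span ℝ ({z} : Set V) := by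
          intro hmem
          obtain ⟨c', hc'⟩ := Submodule.mem_span_singleton.mp hmem
          obtain ⟨c₀, hc₀⟩ := Submodule.mem_span_singleton.mp haz
          have hc₀0 : c₀ ≠ 0 := by
            rintro rfl; rw [zero_smul] at hc₀; exact ha0 hc₀.symm
          exact hw₁a (c' / c₀)
            (by rw [← hc', ← hc₀, smul_smul, div_mul_cancel₀ _ hc₀0])
        obtain ⟨u, l'', hE, hmu', huz⟩ := IH m' hm' (by omega) w₁ hw₁S hw₁z hw₁m'
        exact ⟨u, l'', hE, (hsub ⟨hE.1, hmu'⟩).2, huz⟩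
      · have hbspan : b ∉ Submodule.span ℝ ({w'} : Set V) := by
          intro hmem
          obtain ⟨c, hc⟩ := Submodule.mem_span_singleton.mp hmem
          exact hbw' c hc.symm
        obtain ⟨m', hm', hsub, ⟨w₁, hw₁S, hw₁0, hw₁m', _⟩, hlt⟩ :=
          ratio_cut hp hm hw' hw0 hmw' hbS hmb hbspan
        have hw₁m : m w₁ = 0 := (hsub ⟨mem_coneS_of_mem hw₁S, hw₁m'⟩).2
        have hw₁z : w₁ ∉ Submodule.span ℝ ({z} : Set V) := by
          intro hmem
          exact hz2 ⟨w₁, hw₁S, hw₁m, hw₁0, hmem⟩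
        obtain ⟨u, l'', hE, hmu', huz⟩ := IH m' hm' (by omega) w₁ hw₁S hw₁z hw₁m'
        exact ⟨u, l'', hE, (hsub ⟨hE.1, hmu'⟩).2, huz⟩

lemma sign_combo {a b c₁ c₂ : ℝ} (hab : 0 < a * b) (hc₁ : 0 ≤ c₁) (hc₂ : 0 < c₂) :
    c₁ * a + c₂ * b ≠ 0 := by
  rcases mul_pos_iff.mp hab with ⟨ha, hb⟩ | ⟨ha, hb⟩
  · nlinarith
  · nlinarith

section Quot

variable (ω : V)

lemma mkQ_omega_zero :
    (Submodule.span ℝ ({ω} : Set V)).mkQ ω = 0 := by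
  rw [Submodule.mkQ_apply, Submodule.Quotient.mk_eq_zero]
  exact Submodule.mem_span_singleton_self ω

lemma face_image {C F : Set V} (hF : IsFaceOf F C) (hωF : ω ∈ F) :
    IsFaceOf ((Submodule.span ℝ ({ω} : Set V)).mkQ '' F)
      ((Submodule.span ℝ ({ω} : Set V)).mkQ '' C) := by
  obtain ⟨l, hl, rfl⟩ := hF
  have hlω : l ω = 0 := hωF.2
  set Q := Submodule.span ℝ ({ω} : Set V) with hQ
  have hQle : Q ≤ LinearMap.ker l := by
    rw [hQ, Submodule.span_le]
    intro v hv
    rw [Set.mem_singleton_iff.mp hv]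
    simpa using hlω
  refine ⟨Q.liftQ l hQle, ?_, ?_⟩
  · rintro y ⟨c, hc, rfl⟩
    rw [Submodule.mkQ_apply, Submodule.liftQ_apply]
    exact hl c hc
  · ext y
    constructor
    · rintro ⟨v, ⟨hvC, hvl⟩, rfl⟩
      refine ⟨⟨v, hvC, rfl⟩, ?_⟩
      rw [Set.mem_setOf_eq, Submodule.mkQ_apply, Submodule.liftQ_apply]
      exact hvl
    · rintro ⟨⟨v, hvC, rfl⟩, hy0⟩
      rw [Set.mem_setOf_eq, Submodule.mkQ_apply, Submodule.liftQ_apply] at hy0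
      exact ⟨v, ⟨hvC, hy0⟩, rfl⟩

lemma face_sat {C F : Set V} (hF : IsFaceOf F C) (hωF : ω ∈ F) :
    C ∩ (Submodule.span ℝ ({ω} : Set V)).mkQ ⁻¹'
      ((Submodule.span ℝ ({ω} : Set V)).mkQ '' F) = F := by
  obtain ⟨l, hl, rfl⟩ := hF
  have hlω : l ω = 0 := hωF.2
  ext x
  constructor
  · rintro ⟨hxC, hx⟩
    obtain ⟨f, hfF, hfx⟩ := hx
    have hdiff : f - x ∈ Submodule.span ℝ ({ω} : Set V) := by
      rw [← Submodule.Quotient.eq]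
      exact hfx
    obtain ⟨a, ha⟩ := Submodule.mem_span_singleton.mp hdiff
    refine ⟨hxC, ?_⟩
    have hx_eq : x = f - a • ω := by
      rw [ha]; abel
    rw [Set.mem_setOf_eq, hx_eq, map_sub, map_smul, smul_eq_mul, hlω, mul_zero,
      hfF.2, sub_zero]
  · intro hx
    exact ⟨hx.1, x, hx, rfl⟩

lemma face_pullback {C : Set V} (hωC : ω ∈ C)
    {Ft : Set (V ⧸ Submodule.span ℝ ({ω} : Set V))}
    (hFt : IsFaceOf Ft ((Submodule.span ℝ ({ω} : Set V)).mkQ '' C)) :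
    ∃ F : Set V, IsFaceOf F C ∧ ω ∈ F ∧
      (Submodule.span ℝ ({ω} : Set V)).mkQ '' F = Ft := by
  obtain ⟨lt, hlt, rfl⟩ := hFt
  set π := (Submodule.span ℝ ({ω} : Set V)).mkQ with hπ
  refine ⟨C ∩ {x | (lt.comp π) x = 0}, ⟨lt.comp π, ?_, rfl⟩, ⟨hωC, ?_⟩, ?_⟩
  · intro x hx
    exact hlt (π x) ⟨x, hx, rfl⟩
  · show lt (π ω) = 0
    rw [hπ, mkQ_omega_zero, map_zero]
  · ext y
    constructor
    · rintro ⟨v, ⟨hvC, hv0⟩, rfl⟩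
      exact ⟨⟨v, hvC, rfl⟩, hv0⟩
    · rintro ⟨⟨v, hvC, rfl⟩, hy0⟩
      exact ⟨v, ⟨hvC, hy0⟩, rfl⟩

lemma sdim_image_face [FiniteDimensional ℝ V] {F : Set V} (hωF : ω ∈ F) (hω0 : ω ≠ 0) :
    sdim F = sdim ((Submodule.span ℝ ({ω} : Set V)).mkQ '' F) + 1 := by
  classical
  set Q := Submodule.span ℝ ({ω} : Set V) with hQdef
  set π := Q.mkQ with hπ
  have hspanim : Submodule.span ℝ (π '' F) = (Submodule.span ℝ F).map π :=
    Submodule.span_image π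
  set W := Submodule.span ℝ F with hW
  have hQW : Q ≤ W := by
    rw [hQdef, Submodule.span_le]
    intro v hv
    rw [Set.mem_singleton_iff.mp hv]
    exact Submodule.subset_span hωF
  set f : W →ₗ[ℝ] V ⧸ Q := π.comp W.subtype with hf
  have hrange : LinearMap.range f = W.map π := by
    rw [hf, LinearMap.range_comp, Submodule.range_subtype]
  have hker : LinearMap.ker f = Q.comap W.subtype := by
    rw [hf, LinearMap.ker_comp, Submodule.ker_mkQ]
  have hkerrank : Module.finrank ℝ (LinearMap.ker f) = 1 := by
    rw [hker]
    rw [LinearEquiv.finrank_eq (Submodule.comapSubtypeEquivOfLe hQW)]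
    rw [hQdef]
    exact finrank_span_singleton hω0
  have hrn := LinearMap.finrank_range_add_finrank_ker f
  rw [hrange, hkerrank] at hrn
  unfold sdim
  rw [hspanim, ← hW]
  omega

lemma mem_add_span_iff {C F : Set V} (hωF : ω ∈ Submodule.span ℝ F) (x : V) :
    x ∈ C + (Submodule.span ℝ F : Set V) ↔
      (Submodule.span ℝ ({ω} : Set V)).mkQ x ∈
        ((Submodule.span ℝ ({ω} : Set V)).mkQ '' C) +
          (Submodule.span ℝ ((Submodule.span ℝ ({ω} : Set V)).mkQ '' F) :
            Set (V ⧸ Submodule.span ℝ ({ω} : Set V))) := by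
  set Q := Submodule.span ℝ ({ω} : Set V) with hQdef
  set π := Q.mkQ with hπ
  have hspanim : Submodule.span ℝ (π '' F) = (Submodule.span ℝ F).map π :=
    Submodule.span_image π
  constructor
  · intro hx
    obtain ⟨c, hc, s, hs, rfl⟩ := Set.mem_add.mp hx
    refine Set.mem_add.mpr ⟨π c, ⟨c, hc, rfl⟩, π s, ?_, by rw [map_add]⟩
    rw [SetLike.mem_coe, hspanim]
    exact Submodule.mem_map_of_mem hs
  · intro hx
    obtain ⟨yc, ⟨c, hc, rfl⟩, ys, hys, hsum⟩ := Set.mem_add.mp hx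
    rw [SetLike.mem_coe, hspanim] at hys
    obtain ⟨s, hs, rfl⟩ := Submodule.mem_map.mp hys
    have hdiff : (c + s) - x ∈ Q := by
      rw [← Submodule.Quotient.eq]
      exact hsum
    obtain ⟨a, ha⟩ := Submodule.mem_span_singleton.mp hdiff
    refine Set.mem_add.mpr ⟨c, hc, s - a • ω, ?_, ?_⟩
    · rw [SetLike.mem_coe]
      refine Submodule.sub_mem _ hs (Submodule.smul_mem _ a hωF)
    · rw [ha]; abel

end Quot

section Cross

variable [FiniteDimensional ℝ V] {S : Finset V} {p : Module.Dual ℝ V}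
  {ω : V} {lam lam' : Module.Dual ℝ V}

/-- Wall-crossing invariance for faces not containing `ω`. -/
lemma cross_out (hp : ∀ x ∈ coneS S, x ≠ 0 → 0 < p x) (hωC : ω ∈ coneS S)
    (hDICH : ∀ u l'', EdgeData (coneS S) u l'' →
      (∃ c : ℝ, 0 < c ∧ u = c • ω) ∨ 0 < lam u * lam' u)
    {F : Set V} (hF : IsFaceOf F (coneS S)) (hωF : ω ∉ F)
    (hlam : lam ∈ dualCone F) : lam' ∈ dualCone F := by
  classical
  obtain ⟨l, hlC, hFeq⟩ := isFaceOf_coneS_iff.mp hF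
  set SF := S.filter (fun w => l w = 0) with hSF
  have hFface : coneS S ∩ {x | l x = 0} = F := by rw [hFeq, coneS_face_eq hlC]
  have hlamSF : ∀ w ∈ SF, 0 ≤ lam w := fun w hw =>
    hlam w (hFeq ▸ mem_coneS_of_mem hw)
  suffices h : ∀ w ∈ SF, 0 ≤ lam' w by
    rw [hFeq]; exact mem_dualCone_coneS.mpr h
  by_contra hcon
  push_neg at hcon
  obtain ⟨wb, hwbSF, hwb⟩ := hcon
  set T := SF.filter (fun w => lam' w < 0) with hT
  have hTne : wb ∈ T := by rw [hT]; exact Finset.mem_filter.mpr ⟨hwbSF, hwb⟩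
  have hTden : ∀ w ∈ T, 0 < lam w - lam' w := by
    intro w hw
    obtain ⟨hwSF, hwneg⟩ := Finset.mem_filter.mp hw
    have := hlamSF w hwSF
    linarith
  set s₀ := T.inf' ⟨wb, hTne⟩ (fun w => lam w / (lam w - lam' w)) with hs₀
  have hs₀0 : 0 ≤ s₀ := by
    rw [hs₀]
    apply Finset.le_inf'
    intro w hw
    exact div_nonneg (hlamSF w (Finset.mem_filter.mp hw).1) (hTden w hw).le
  have hs₀1 : s₀ < 1 := by
    have h1 : s₀ ≤ lam wb / (lam wb - lam' wb) := Finset.inf'_le _ hTne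
    have h2 : lam wb / (lam wb - lam' wb) < 1 := by
      rw [div_lt_one (hTden wb hTne)]
      linarith
    linarith
  set ν : Module.Dual ℝ V := (1 - s₀) • lam + s₀ • lam' with hν
  have hνval : ∀ v : V, ν v = (1 - s₀) * lam v + s₀ * lam' v := by
    intro v
    rw [hν]
    simp [LinearMap.add_apply, LinearMap.smul_apply, smul_eq_mul]
  have hνSF : ∀ w ∈ SF, 0 ≤ ν w := by
    intro w hw
    rw [hνval]
    rcases le_or_gt 0 (lam' w) with h | h
    · have := hlamSF w hw
      have h1 : 0 ≤ (1 - s₀) * lam w := mul_nonneg (by linarith) this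
      have h2 : 0 ≤ s₀ * lam' w := mul_nonneg hs₀0 h
      linarith
    · have hwT : w ∈ T := Finset.mem_filter.mpr ⟨hw, h⟩
      have h1 : s₀ ≤ lam w / (lam w - lam' w) := Finset.inf'_le _ hwT
      have h2 : s₀ * (lam w - lam' w) ≤ lam w :=
        (le_div_iff₀ (hTden w hwT)).mp h1
      nlinarith
  obtain ⟨w₁, hw₁T, hw₁min⟩ :=
    Finset.exists_mem_eq_inf' ⟨wb, hTne⟩ (fun w => lam w / (lam w - lam' w))
  have hw₁SF : w₁ ∈ SF := (Finset.mem_filter.mp hw₁T).1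
  have hw₁neg : lam' w₁ < 0 := (Finset.mem_filter.mp hw₁T).2
  have hw₁0 : w₁ ≠ 0 := by
    intro h; rw [h] at hw₁neg; simp at hw₁neg
  have hνw₁ : ν w₁ = 0 := by
    rw [hνval]
    have hden := hTden w₁ hw₁T
    have : s₀ * (lam w₁ - lam' w₁) = lam w₁ := by
      rw [hs₀, hw₁min, div_mul_cancel₀ _ (ne_of_gt hden)]
    nlinarith
  have hνface : ∀ y ∈ coneS S, l y = 0 → 0 ≤ ν y := by
    intro y hy hly
    have : y ∈ coneS SF := by rw [hSF, ← coneS_face_eq hlC]; exact ⟨hy, hly⟩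
    exact coneS_nonneg hνSF this
  obtain ⟨l₂, hl₂C, hl₂eq⟩ := face_of_face hlC ν hνface
  have hw₁mem : w₁ ∈ coneS S ∩ {x | l₂ x = 0} := by
    rw [hl₂eq]
    have hw₁S : w₁ ∈ S := (Finset.mem_filter.mp hw₁SF).1
    exact ⟨⟨mem_coneS_of_mem hw₁S, (Finset.mem_filter.mp hw₁SF).2⟩, hνw₁⟩
  have hw₁z : w₁ ∉ Submodule.span ℝ ({(0:V)} : Set V) := by
    rw [Submodule.span_zero_singleton]
    simpa using hw₁0
  obtain ⟨u, l'', hE, hul₂, _⟩ := edge_avoid hp 0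
    (sdim (coneS S ∩ {x | l₂ x = 0})) l₂ hl₂C (le_refl _)
    w₁ (Finset.mem_filter.mp hw₁SF).1 hw₁z hw₁mem.2
  have humem : u ∈ (coneS S ∩ {x | l x = 0}) ∩ {x | ν x = 0} := by
    rw [← hl₂eq]; exact ⟨hE.1, hul₂⟩
  rcases hDICH u l'' hE with ⟨c, hc, rfl⟩ | hpos
  · -- the edge is the ray of ω : contradiction with ω ∉ F
    apply hωF
    rw [← hFface]
    refine ⟨hωC, ?_⟩
    have hlu : l (c • ω) = 0 := humem.1.2
    rw [map_smul, smul_eq_mul] at hlu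
    rcases mul_eq_zero.mp hlu with h | h
    · exact absurd h (ne_of_gt hc)
    · exact h
  · -- sign contradiction
    have hνu : ν u = 0 := humem.2
    rw [hνval] at hνu
    have h0 : s₀ * lam' u + (1 - s₀) * lam u = 0 := by linarith
    have hab : 0 < lam' u * lam u := by rw [mul_comm]; exact hpos
    exact sign_combo hab hs₀0 (by linarith) h0

/-- For faces containing `ω`: `λ ∈ F*` implies `μ ∈ F*`. -/
lemma cross_mu_of_lam (hp : ∀ x ∈ coneS S, x ≠ 0 → 0 < p x) (hωC : ω ∈ coneS S)
    (hDICH : ∀ u l'', EdgeData (coneS S) u l'' →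
      (∃ c : ℝ, 0 < c ∧ u = c • ω) ∨ 0 < lam u * lam' u)
    {t : ℝ} {μ : Module.Dual ℝ V}
    (hμval : ∀ v : V, μ v = (1 - t) * lam v + t * lam' v)
    (hμω : μ ω = 0) (hlamω : 0 < lam ω) (hlam'ω : lam' ω < 0)
    (ht0 : 0 < t) (ht1 : t < 1)
    {F : Set V} (hF : IsFaceOf F (coneS S)) (hωF : ω ∈ F)
    (hlam : lam ∈ dualCone F) : μ ∈ dualCone F := by
  classical
  obtain ⟨l, hlC, hFeq⟩ := isFaceOf_coneS_iff.mp hF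
  set SF := S.filter (fun w => l w = 0) with hSF
  have hlamSF : ∀ w ∈ SF, 0 ≤ lam w := fun w hw =>
    hlam w (hFeq ▸ mem_coneS_of_mem hw)
  suffices h : ∀ w ∈ SF, 0 ≤ μ w by
    rw [hFeq]; exact mem_dualCone_coneS.mpr h
  by_contra hcon
  push_neg at hcon
  obtain ⟨wb, hwbSF, hwb⟩ := hcon
  have hwb' : lam' wb < 0 := by
    rw [hμval] at hwb
    have := hlamSF wb hwbSF
    nlinarith
  set T := SF.filter (fun w => lam' w < 0) with hT
  have hTne : wb ∈ T := by rw [hT]; exact Finset.mem_filter.mpr ⟨hwbSF, hwb'⟩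
  have hTden : ∀ w ∈ T, 0 < lam w - lam' w := by
    intro w hw
    obtain ⟨hwSF, hwneg⟩ := Finset.mem_filter.mp hw
    have := hlamSF w hwSF
    linarith
  set s₀ := T.inf' ⟨wb, hTne⟩ (fun w => lam w / (lam w - lam' w)) with hs₀
  have hs₀0 : 0 ≤ s₀ := by
    rw [hs₀]
    apply Finset.le_inf'
    intro w hw
    exact div_nonneg (hlamSF w (Finset.mem_filter.mp hw).1) (hTden w hw).le
  have hs₀t : s₀ < t := by
    have h1 : s₀ ≤ lam wb / (lam wb - lam' wb) := Finset.inf'_le _ hTne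
    have h2 : lam wb / (lam wb - lam' wb) < t := by
      rw [div_lt_iff₀ (hTden wb hTne)]
      rw [hμval] at hwb
      nlinarith
    linarith
  have hs₀1 : s₀ < 1 := lt_trans hs₀t ht1
  set ν : Module.Dual ℝ V := (1 - s₀) • lam + s₀ • lam' with hν
  have hνval : ∀ v : V, ν v = (1 - s₀) * lam v + s₀ * lam' v := by
    intro v
    rw [hν]
    simp [LinearMap.add_apply, LinearMap.smul_apply, smul_eq_mul]
  have hνSF : ∀ w ∈ SF, 0 ≤ ν w := by
    intro w hw
    rw [hνval]
    rcases le_or_gt 0 (lam' w) with h | h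
    · have := hlamSF w hw
      have h1 : 0 ≤ (1 - s₀) * lam w := mul_nonneg (by linarith) this
      have h2 : 0 ≤ s₀ * lam' w := mul_nonneg hs₀0 h
      linarith
    · have hwT : w ∈ T := Finset.mem_filter.mpr ⟨hw, h⟩
      have h1 : s₀ ≤ lam w / (lam w - lam' w) := Finset.inf'_le _ hwT
      have h2 : s₀ * (lam w - lam' w) ≤ lam w :=
        (le_div_iff₀ (hTden w hwT)).mp h1
      nlinarith
  obtain ⟨w₁, hw₁T, hw₁min⟩ :=
    Finset.exists_mem_eq_inf' ⟨wb, hTne⟩ (fun w => lam w / (lam w - lam' w))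
  have hw₁SF : w₁ ∈ SF := (Finset.mem_filter.mp hw₁T).1
  have hw₁neg : lam' w₁ < 0 := (Finset.mem_filter.mp hw₁T).2
  have hw₁0 : w₁ ≠ 0 := by
    intro h; rw [h] at hw₁neg; simp at hw₁neg
  have hνw₁ : ν w₁ = 0 := by
    rw [hνval]
    have hden := hTden w₁ hw₁T
    have : s₀ * (lam w₁ - lam' w₁) = lam w₁ := by
      rw [hs₀, hw₁min, div_mul_cancel₀ _ (ne_of_gt hden)]
    nlinarith
  have hνface : ∀ y ∈ coneS S, l y = 0 → 0 ≤ ν y := by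
    intro y hy hly
    have : y ∈ coneS SF := by rw [hSF, ← coneS_face_eq hlC]; exact ⟨hy, hly⟩
    exact coneS_nonneg hνSF this
  obtain ⟨l₂, hl₂C, hl₂eq⟩ := face_of_face hlC ν hνface
  have hw₁mem : w₁ ∈ coneS S ∩ {x | l₂ x = 0} := by
    rw [hl₂eq]
    have hw₁S : w₁ ∈ S := (Finset.mem_filter.mp hw₁SF).1
    exact ⟨⟨mem_coneS_of_mem hw₁S, (Finset.mem_filter.mp hw₁SF).2⟩, hνw₁⟩
  have hw₁z : w₁ ∉ Submodule.span ℝ ({(0:V)} : Set V) := by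
    rw [Submodule.span_zero_singleton]
    simpa using hw₁0
  obtain ⟨u, l'', hE, hul₂, _⟩ := edge_avoid hp 0
    (sdim (coneS S ∩ {x | l₂ x = 0})) l₂ hl₂C (le_refl _)
    w₁ (Finset.mem_filter.mp hw₁SF).1 hw₁z hw₁mem.2
  have humem : u ∈ (coneS S ∩ {x | l x = 0}) ∩ {x | ν x = 0} := by
    rw [← hl₂eq]; exact ⟨hE.1, hul₂⟩
  rcases hDICH u l'' hE with ⟨c, hc, rfl⟩ | hpos
  · -- edge on the ray of ω : but ν(ω) > 0 since s₀ < t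
    have hνu : ν (c • ω) = 0 := humem.2
    rw [map_smul, smul_eq_mul] at hνu
    have hνω : ν ω = 0 := by
      rcases mul_eq_zero.mp hνu with h | h
      · exact absurd h (ne_of_gt hc)
      · exact h
    rw [hνval] at hνω
    have hμω' := hμω
    rw [hμval] at hμω'
    nlinarith
  · have hνu : ν u = 0 := humem.2
    rw [hνval] at hνu
    have h0 : s₀ * lam' u + (1 - s₀) * lam u = 0 := by linarith
    have hab : 0 < lam' u * lam u := by rw [mul_comm]; exact hpos
    exact sign_combo hab hs₀0 (by linarith) h0

/-- For faces containing `ω`: `μ ∈ F*` implies `λ ∈ F*`. -/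
lemma cross_lam_of_mu (hp : ∀ x ∈ coneS S, x ≠ 0 → 0 < p x) (hωC : ω ∈ coneS S)
    (hω0 : ω ≠ 0)
    (hpt : ∀ y ∈ coneS S, -y ∈ coneS S → y = 0)
    (hDICH : ∀ u l'', EdgeData (coneS S) u l'' →
      (∃ c : ℝ, 0 < c ∧ u = c • ω) ∨ 0 < lam u * lam' u)
    {t : ℝ} {μ : Module.Dual ℝ V}
    (hμval : ∀ v : V, μ v = (1 - t) * lam v + t * lam' v)
    (hμω : μ ω = 0) (hlamω : 0 < lam ω) (hlam'ω : lam' ω < 0)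
    (ht0 : 0 < t) (ht1 : t < 1)
    {F : Set V} (hF : IsFaceOf F (coneS S)) (hωF : ω ∈ F)
    (hμF : μ ∈ dualCone F) : lam ∈ dualCone F := by
  classical
  obtain ⟨l, hlC, hFeq⟩ := isFaceOf_coneS_iff.mp hF
  set SF := S.filter (fun w => l w = 0) with hSF
  have hμSF : ∀ w ∈ SF, 0 ≤ μ w := fun w hw =>
    hμF w (hFeq ▸ mem_coneS_of_mem hw)
  suffices h : ∀ w ∈ SF, 0 ≤ lam w by
    rw [hFeq]; exact mem_dualCone_coneS.mpr h
  by_contra hcon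
  push_neg at hcon
  obtain ⟨wb, hwbSF, hwb⟩ := hcon
  set T := SF.filter (fun w => lam w < 0) with hT
  have hTne : wb ∈ T := by rw [hT]; exact Finset.mem_filter.mpr ⟨hwbSF, hwb⟩
  have hTpos' : ∀ w ∈ T, 0 < lam' w := by
    intro w hw
    obtain ⟨hwSF, hwneg⟩ := Finset.mem_filter.mp hw
    have := hμSF w hwSF
    rw [hμval] at this
    nlinarith
  have hTden : ∀ w ∈ T, lam w - lam' w < 0 := by
    intro w hw
    have h1 := (Finset.mem_filter.mp hw).2
    have h2 := hTpos' w hw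
    linarith
  set r₀ := T.sup' ⟨wb, hTne⟩ (fun w => lam w / (lam w - lam' w)) with hr₀
  have hval_pos : ∀ w ∈ T, 0 < lam w / (lam w - lam' w) := by
    intro w hw
    exact div_pos_of_neg_of_neg (Finset.mem_filter.mp hw).2 (hTden w hw)
  have hval_le_t : ∀ w ∈ T, lam w / (lam w - lam' w) ≤ t := by
    intro w hw
    rw [div_le_iff_of_neg (hTden w hw)]
    have := hμSF w (Finset.mem_filter.mp hw).1
    rw [hμval] at this
    nlinarith
  have hr₀0 : 0 < r₀ := lt_of_lt_of_le (hval_pos wb hTne) (Finset.le_sup' (f := fun w => lam w / (lam w - lam' w)) hTne)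
  have hr₀t : r₀ ≤ t := Finset.sup'_le _ _ hval_le_t
  set ν : Module.Dual ℝ V := (1 - r₀) • lam + r₀ • lam' with hν
  have hνval : ∀ v : V, ν v = (1 - r₀) * lam v + r₀ * lam' v := by
    intro v
    rw [hν]
    simp [LinearMap.add_apply, LinearMap.smul_apply, smul_eq_mul]
  have hνSF : ∀ w ∈ SF, 0 ≤ ν w := by
    intro w hw
    rw [hνval]
    rcases le_or_gt 0 (lam w) with h | h
    · -- use t • ν w = r₀ • μ w + (t - r₀) • lam w
      have hμw := hμSF w hw
      rw [hμval] at hμw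
      have hkey : t * ((1 - r₀) * lam w + r₀ * lam' w) =
          r₀ * ((1 - t) * lam w + t * lam' w) + (t - r₀) * lam w := by ring
      nlinarith [mul_nonneg (sub_nonneg.mpr hr₀t) h, mul_nonneg hr₀0.le hμw]
    · have hwT : w ∈ T := Finset.mem_filter.mpr ⟨hw, h⟩
      have h1 : lam w / (lam w - lam' w) ≤ r₀ :=
        Finset.le_sup' (f := fun w => lam w / (lam w - lam' w)) hwT
      have hden := hTden w hwT
      have h2 : r₀ * (lam w - lam' w) ≤ lam w := by
        have := mul_le_mul_of_nonpos_right h1 hden.le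
        rwa [div_mul_cancel₀ _ (ne_of_lt hden)] at this
      nlinarith
  obtain ⟨w₁, hw₁T, hw₁max⟩ :=
    Finset.exists_mem_eq_sup' ⟨wb, hTne⟩ (fun w => lam w / (lam w - lam' w))
  have hw₁SF : w₁ ∈ SF := (Finset.mem_filter.mp hw₁T).1
  have hw₁neg : lam w₁ < 0 := (Finset.mem_filter.mp hw₁T).2
  have hw₁0 : w₁ ≠ 0 := by
    intro h; rw [h] at hw₁neg; simp at hw₁neg
  have hνw₁ : ν w₁ = 0 := by
    rw [hνval]
    have hden := hTden w₁ hw₁T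
    have : r₀ * (lam w₁ - lam' w₁) = lam w₁ := by
      rw [hr₀, hw₁max, div_mul_cancel₀ _ (ne_of_lt hden)]
    nlinarith
  have hνface : ∀ y ∈ coneS S, l y = 0 → 0 ≤ ν y := by
    intro y hy hly
    have : y ∈ coneS SF := by rw [hSF, ← coneS_face_eq hlC]; exact ⟨hy, hly⟩
    exact coneS_nonneg hνSF this
  obtain ⟨l₂, hl₂C, hl₂eq⟩ := face_of_face hlC ν hνface
  have hw₁S : w₁ ∈ S := (Finset.mem_filter.mp hw₁SF).1
  have hw₁mem : w₁ ∈ coneS S ∩ {x | l₂ x = 0} := by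
    rw [hl₂eq]
    exact ⟨⟨mem_coneS_of_mem hw₁S, (Finset.mem_filter.mp hw₁SF).2⟩, hνw₁⟩
  have hw₁z : w₁ ∉ Submodule.span ℝ ({(0:V)} : Set V) := by
    rw [Submodule.span_zero_singleton]
    simpa using hw₁0
  obtain ⟨u, l'', hE, hul₂, _⟩ := edge_avoid hp 0
    (sdim (coneS S ∩ {x | l₂ x = 0})) l₂ hl₂C (le_refl _)
    w₁ hw₁S hw₁z hw₁mem.2
  have humem : u ∈ (coneS S ∩ {x | l x = 0}) ∩ {x | ν x = 0} := by
    rw [← hl₂eq]; exact ⟨hE.1, hul₂⟩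
  have hdenΩ : 0 < lam ω - lam' ω := by linarith
  have hμωval : (1 - t) * lam ω + t * lam' ω = 0 := by rw [← hμval]; exact hμω
  rcases hDICH u l'' hE with ⟨c, hc, rfl⟩ | hpos
  · -- edge on the ray of ω : forces r₀ = t, i.e. ν = μ
    have hνu : ν (c • ω) = 0 := humem.2
    rw [map_smul, smul_eq_mul] at hνu
    have hνω : ν ω = 0 := by
      rcases mul_eq_zero.mp hνu with h | h
      · exact absurd h (ne_of_gt hc)
      · exact h
    rw [hνval] at hνω
    have hsub : (t - r₀) * (lam ω - lam' ω) = 0 := by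
      linear_combination hνω - hμωval
    have hr₀eq : r₀ = t := by
      rcases mul_eq_zero.mp hsub with h | h
      · linarith
      · linarith
    -- now ν agrees with μ pointwise
    have hνμ : ∀ v : V, ν v = μ v := by
      intro v
      rw [hνval, hμval, hr₀eq]
    -- case on whether w₁ is a multiple of ω
    by_cases hw₁span : w₁ ∈ Submodule.span ℝ ({ω} : Set V)
    · obtain ⟨c₁, hc₁⟩ := Submodule.mem_span_singleton.mp hw₁span
      have hc₁0 : c₁ ≠ 0 := by
        rintro rfl; rw [zero_smul] at hc₁; exact hw₁0 hc₁.symm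
      rcases lt_or_gt_of_ne hc₁0 with hneg | hpos₁
      · -- c₁ < 0 contradicts pointedness
        have hmem : -ω ∈ coneS S := by
          have hcoef : (-c₁)⁻¹ * c₁ = -1 := by
            rw [inv_neg, neg_mul, inv_mul_cancel₀ hc₁0]
          have : -ω = (-c₁)⁻¹ • w₁ := by
            rw [← hc₁, smul_smul, hcoef, neg_one_smul]
          rw [this]
          exact smul_mem_coneS (mem_coneS_of_mem hw₁S)
            (inv_nonneg.mpr (by linarith))
        exact hω0 (hpt ω hωC hmem)
      · -- c₁ > 0 gives lam w₁ > 0, contradiction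
        have heq : lam w₁ = c₁ * lam ω := by rw [← hc₁, map_smul, smul_eq_mul]
        have hgt := mul_pos hpos₁ hlamω
        rw [heq] at hw₁neg
        linarith
    · -- get an edge avoiding the line of ω inside F ∩ ker μ
      obtain ⟨u', l₃, hE', hul₃, hu'span⟩ := edge_avoid hp ω
        (sdim (coneS S ∩ {x | l₂ x = 0})) l₂ hl₂C (le_refl _)
        w₁ hw₁S hw₁span hw₁mem.2
      have humem' : u' ∈ (coneS S ∩ {x | l x = 0}) ∩ {x | ν x = 0} := by
        rw [← hl₂eq]; exact ⟨hE'.1, hul₃⟩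
      rcases hDICH u' l₃ hE' with ⟨c', hc', rfl⟩ | hpos' 
      · exact hu'span (Submodule.mem_span_singleton.mpr ⟨c', rfl⟩)
      · have hμu' : μ u' = 0 := by rw [← hνμ]; exact humem'.2
        rw [hμval] at hμu'
        have h0 : t * lam' u' + (1 - t) * lam u' = 0 := by linarith
        have hab : 0 < lam' u' * lam u' := by rw [mul_comm]; exact hpos'
        exact sign_combo hab ht0.le (by linarith) h0
  · have hνu : ν u = 0 := humem.2
    rw [hνval] at hνu
    have h0 : (1 - r₀) * lam u + r₀ * lam' u = 0 := by linarith
    exact sign_combo hpos (by linarith : (0:ℝ) ≤ 1 - r₀) hr₀0 h0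

end Cross

lemma ind_congr {α β : Type*} {s : Set α} {t : Set β} {a : α} {b : β}
    (h : a ∈ s ↔ b ∈ t) : ind s a = ind t b := by
  unfold ind
  by_cases ha : a ∈ s
  · rw [if_pos ha, if_pos (h.mp ha)]
  · rw [if_neg ha, if_neg (fun hb => ha (h.mpr hb))]

lemma ind_eq_zero {α : Type*} {s : Set α} {a : α} (h : a ∉ s) : ind s a = 0 :=
  if_neg h

end CorA3Aux

/-- **Corollary A.3**: let `C` be a full-dimensional closed convex polyhedral cone
with full-dimensional dual `C*`, and let `λ, λ'` be `C*`-regular elements in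
adjacent chambers (for `C*`) separated only by the wall `Z` of `C*`.  Let `ω ∈ C`
be a nonzero element of the face `(C* ∩ Z)^⊥` of `C`, with `λ(ω) > 0` and
`λ'(ω) < 0`.  Then for every `x`,
`ψ_C(x,λ) − ψ_C(x,λ') = −ψ_{C̃}(x̃, λ̃)`, where `C̃, x̃` are the images of `C, x` in
`X̃ = X/ℝω` and `λ̃` is the unique point of `Z` on the segment joining `λ` and `λ'`,
viewed as a functional on `X̃`. -/
theorem corollary_A_3
    {V : Type*} [AddCommGroup V] [Module ℝ V] [FiniteDimensional ℝ V]
    (C : Set V) (hC : IsPolyhedralCone C)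
    (hdimC : sdim C = Module.finrank ℝ V)
    (hdimCstar : sdim (dualCone C) = Module.finrank ℝ V)
    -- the wall `Z = span G`, for a facet `G` of `C*`
    (G : Set (Module.Dual ℝ V)) (hG : IsFaceOf G (dualCone C))
    (hGdim : sdim G = sdim (dualCone C) - 1)
    (Z : Set (Module.Dual ℝ V)) (hZ : Z = (Submodule.span ℝ G : Set (Module.Dual ℝ V)))
    -- `ω` is a nonzero element of the face `(C* ∩ Z)^⊥` of `C`
    (ω : V) (hω0 : ω ≠ 0) (hωC : ω ∈ C)
    (hωface : ∀ m ∈ dualCone C, m ∈ Z → m ω = 0)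
    (lam lam' : Module.Dual ℝ V)
    -- `λ` and `λ'` are `C*`-regular
    (hreg : ∀ G' : Set (Module.Dual ℝ V), IsFaceOf G' (dualCone C) →
        sdim G' = sdim (dualCone C) - 1 →
        lam ∉ (Submodule.span ℝ G' : Set (Module.Dual ℝ V)))
    (hreg' : ∀ G' : Set (Module.Dual ℝ V), IsFaceOf G' (dualCone C) →
        sdim G' = sdim (dualCone C) - 1 →
        lam' ∉ (Submodule.span ℝ G' : Set (Module.Dual ℝ V)))
    -- they lie on the same side of every wall of `C*` other than `Z` ...
    (honly : ∀ G' : Set (Module.Dual ℝ V), IsFaceOf G' (dualCone C) →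
        sdim G' = sdim (dualCone C) - 1 →
        Submodule.span ℝ G' ≠ Submodule.span ℝ G →
        ∀ v : V, {m : Module.Dual ℝ V | m v = 0} =
            (Submodule.span ℝ G' : Set (Module.Dual ℝ V)) →
          0 < lam v * lam' v)
    -- ... with `λ, C*` on the same side of `Z`: `λ(ω) > 0` and `λ'(ω) < 0`
    (hsep : 0 < lam ω) (hsep' : lam' ω < 0)
    -- `μ = λ̃` is the unique point of `Z` on the segment joining `λ` and `λ'`
    (μ : Module.Dual ℝ V) (t : ℝ) (ht : t ∈ Set.Icc (0:ℝ) 1)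
    (hμ : μ = (1 - t) • lam + t • lam') (hμZ : μ ∈ Z)
    -- `μQ` is `μ` viewed as a functional on `X̃ = X/ℝω`
    (μQ : Module.Dual ℝ (V ⧸ Submodule.span ℝ ({ω} : Set V)))
    (hμQ : μQ.comp (Submodule.span ℝ ({ω} : Set V)).mkQ = μ) :
    ∀ x : V,
      psi C x lam - psi C x lam' =
        - psi ((Submodule.span ℝ ({ω} : Set V)).mkQ '' C)
            ((Submodule.span ℝ ({ω} : Set V)).mkQ x) μQ := by
  classical
  obtain ⟨S, hS⟩ := hC
  have hCc : C = coneS S := hS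
  subst hCc
  -- the span of the dual cone is everything
  have hspanCstar : Submodule.span ℝ (dualCone (coneS S)) = ⊤ := by
    apply Submodule.eq_top_of_finrank_eq
    have h1 : Module.finrank ℝ (Submodule.span ℝ (dualCone (coneS S))) =
        Module.finrank ℝ V := hdimCstar
    rw [h1, Subspace.dual_finrank_eq]
  obtain ⟨p, hpC, hp⟩ := exists_pos_functional hspanCstar
  -- pointedness
  have hpt : ∀ y ∈ coneS S, -y ∈ coneS S → y = 0 := by
    intro y hy hyneg
    by_contra hy0
    have h1 := hp y hy hy0
    have h2 := hp (-y) hyneg (by simpa using hy0)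
    rw [map_neg] at h2
    linarith
  have hμω : μ ω = 0 := by
    have h1 : μ ω = μQ ((Submodule.span ℝ ({ω} : Set V)).mkQ ω) := by
      rw [← hμQ]; rfl
    rw [h1, mkQ_omega_zero, map_zero]
  have hμval : ∀ v : V, μ v = (1 - t) * lam v + t * lam' v := by
    intro v
    rw [hμ]
    simp [LinearMap.add_apply, LinearMap.smul_apply, smul_eq_mul]
  have ht0 : 0 < t := by
    rcases ht.1.lt_or_eq with h | h
    · exact h
    · exfalso
      have := hμval ω
      rw [hμω, ← h] at this
      simp at this
      linarith
  have ht1 : t < 1 := by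
    rcases ht.2.lt_or_eq with h | h
    · exact h
    · exfalso
      have := hμval ω
      rw [hμω, h] at this
      simp at this
      linarith
  -- `span G` is the hyperplane `ω^⊥`
  have hGsub : G ⊆ dualCone (coneS S) := by
    obtain ⟨L, hL, hGeq⟩ := hG
    rw [hGeq]
    exact Set.inter_subset_left
  have hZle : Submodule.span ℝ G ≤ LinearMap.ker (Module.Dual.eval ℝ V ω) := by
    rw [Submodule.span_le]
    intro m hm
    have hmZ : m ∈ Z := by
      rw [hZ]
      exact Submodule.subset_span hm
    have := hωface m (hGsub hm) hmZ
    simpa [Module.Dual.eval_apply] using this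
  have hZker : Submodule.span ℝ G = LinearMap.ker (Module.Dual.eval ℝ V ω) := by
    apply Submodule.eq_of_le_of_finrank_eq hZle
    rw [finrank_hyperplane hω0]
    have h1 : sdim G = Module.finrank ℝ V - 1 := by rw [hGdim, hdimCstar]
    exact h1
  -- the sign dichotomy for edges
  have hDICH : ∀ u l'', EdgeData (coneS S) u l'' →
      (∃ c : ℝ, 0 < c ∧ u = c • ω) ∨ 0 < lam u * lam' u := by
    intro u l'' hE
    have hu0 : u ≠ 0 := hE.2.1
    have hspanfacet := edge_span_facet hE
    by_cases hker : LinearMap.ker (Module.Dual.eval ℝ V u) =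
        LinearMap.ker (Module.Dual.eval ℝ V ω)
    · left
      have huω : u ∈ Submodule.span ℝ ({ω} : Set V) := by
        by_contra hcon
        obtain ⟨f, hfω, hfu⟩ := exists_dual_vanish hcon
        have hmem : f ∈ LinearMap.ker (Module.Dual.eval ℝ V ω) := by
          simpa [Module.Dual.eval_apply] using hfω
        rw [← hker] at hmem
        have hfu0 : f u = 0 := by simpa [Module.Dual.eval_apply] using hmem
        rw [hfu0] at hfu
        norm_num at hfu
      obtain ⟨c, hc⟩ := Submodule.mem_span_singleton.mp huω
      have hc0 : c ≠ 0 := by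
        rintro rfl
        rw [zero_smul] at hc
        exact hu0 hc.symm
      rcases lt_or_gt_of_ne hc0 with hneg | hposc
      · exfalso
        have hmem : -ω ∈ coneS S := by
          have hcoef : (-c)⁻¹ * c = -1 := by
            rw [inv_neg, neg_mul, inv_mul_cancel₀ hc0]
          have hrw : -ω = (-c)⁻¹ • u := by
            rw [← hc, smul_smul, hcoef, neg_one_smul]
          rw [hrw]
          exact smul_mem_coneS hE.1 (inv_nonneg.mpr (by linarith))
        exact hω0 (hpt ω hωC hmem)
      · exact ⟨c, hposc, hc.symm⟩
    · right
      have hface := facet_isFaceOf (S := S) hE.1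
      have hsdim : sdim (dualCone (coneS S) ∩ {m : Module.Dual ℝ V | m u = 0}) =
          sdim (dualCone (coneS S)) - 1 := by
        rw [facet_sdim hE, hdimCstar]
      refine honly _ hface hsdim ?_ u ?_
      · rw [hspanfacet, hZker]
        exact hker
      · rw [hspanfacet]
        ext m
        simp [Module.Dual.eval_apply]
  have hDICH' : ∀ u l'', EdgeData (coneS S) u l'' →
      (∃ c : ℝ, 0 < c ∧ u = c • ω) ∨ 0 < lam' u * lam u := by
    intro u l'' hE
    rcases hDICH u l'' hE with h | h
    · exact Or.inl h
    · exact Or.inr (by rw [mul_comm]; exact h)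
  intro x
  have hμπ : ∀ v : V, μQ ((Submodule.span ℝ ({ω} : Set V)).mkQ v) = μ v := by
    intro v
    rw [← hμQ]
    rfl
  -- finiteness of the sets of faces
  have hfin : {F : Set V | IsFaceOf F (coneS S)}.Finite := faces_finite S
  have hfin' : {Ft : Set (V ⧸ Submodule.span ℝ ({ω} : Set V)) |
      IsFaceOf Ft ((Submodule.span ℝ ({ω} : Set V)).mkQ '' coneS S)}.Finite := by
    apply Set.Finite.subset
      (Set.Finite.image (Set.image ((Submodule.span ℝ ({ω} : Set V)).mkQ)) hfin)
    intro Ft hFt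
    obtain ⟨F, hF, _, hFeq⟩ := face_pullback ω hωC hFt
    exact ⟨F, hF, hFeq⟩
  set A := hfin.toFinset with hA
  set B := hfin'.toFinset with hB
  -- rewrite the three psi's as finite sums
  rw [show psi (coneS S) x lam = ∑ F ∈ A,
        (-1 : ℤ) ^ sdim F * ind (coneS S + (Submodule.span ℝ F : Set V)) x *
          ind (dualCone F) lam from
      finsum_mem_eq_finite_toFinset_sum _ hfin,
    show psi (coneS S) x lam' = ∑ F ∈ A,
        (-1 : ℤ) ^ sdim F * ind (coneS S + (Submodule.span ℝ F : Set V)) x *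
          ind (dualCone F) lam' from
      finsum_mem_eq_finite_toFinset_sum _ hfin,
    show psi ((Submodule.span ℝ ({ω} : Set V)).mkQ '' coneS S)
        ((Submodule.span ℝ ({ω} : Set V)).mkQ x) μQ = ∑ Ft ∈ B,
        (-1 : ℤ) ^ sdim Ft *
          ind (((Submodule.span ℝ ({ω} : Set V)).mkQ '' coneS S) +
            (Submodule.span ℝ Ft : Set (V ⧸ Submodule.span ℝ ({ω} : Set V))))
            ((Submodule.span ℝ ({ω} : Set V)).mkQ x) *
          ind (dualCone Ft) μQ from
      finsum_mem_eq_finite_toFinset_sum _ hfin']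
  rw [← Finset.sum_sub_distrib]
  rw [← Finset.sum_filter_add_sum_filter_not A (fun F => ω ∈ F)]
  have hvanish : ∀ F ∈ A.filter (fun F => ω ∉ F),
      (-1 : ℤ) ^ sdim F * ind (coneS S + (Submodule.span ℝ F : Set V)) x *
          ind (dualCone F) lam -
        (-1 : ℤ) ^ sdim F * ind (coneS S + (Submodule.span ℝ F : Set V)) x *
          ind (dualCone F) lam' = 0 := by
    intro F hF
    obtain ⟨hFA, hωF⟩ := Finset.mem_filter.mp hF
    have hFface : IsFaceOf F (coneS S) := hfin.mem_toFinset.mp hFA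
    have hiff : lam ∈ dualCone F ↔ lam' ∈ dualCone F := by
      constructor
      · intro h
        exact cross_out hp hωC hDICH hFface hωF h
      · intro h
        exact cross_out (lam := lam') (lam' := lam) hp hωC hDICH' hFface hωF h
    rw [ind_congr hiff]
    ring
  rw [Finset.sum_eq_zero hvanish, add_zero]
  rw [← Finset.sum_neg_distrib]
  apply Finset.sum_bij
    (i := fun F _ => (Submodule.span ℝ ({ω} : Set V)).mkQ '' F)
  · -- membership
    intro F hF
    obtain ⟨hFA, hωF⟩ := Finset.mem_filter.mp hF
    have hFface : IsFaceOf F (coneS S) := hfin.mem_toFinset.mp hFA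
    exact hfin'.mem_toFinset.mpr (face_image ω hFface hωF)
  · -- injectivity
    intro F₁ hF₁ F₂ hF₂ heq
    obtain ⟨hF₁A, hωF₁⟩ := Finset.mem_filter.mp hF₁
    obtain ⟨hF₂A, hωF₂⟩ := Finset.mem_filter.mp hF₂
    have h₁ := face_sat ω (hfin.mem_toFinset.mp hF₁A) hωF₁
    have h₂ := face_sat ω (hfin.mem_toFinset.mp hF₂A) hωF₂
    rw [← h₁, ← h₂, heq]
  · -- surjectivity
    intro Ft hFt
    obtain ⟨F, hFface, hωF, hFeq⟩ :=
      face_pullback ω hωC (hfin'.mem_toFinset.mp hFt)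
    exact ⟨F, Finset.mem_filter.mpr ⟨hfin.mem_toFinset.mpr hFface, hωF⟩, hFeq⟩
  · -- values agree
    intro F hF
    obtain ⟨hFA, hωF⟩ := Finset.mem_filter.mp hF
    have hFface : IsFaceOf F (coneS S) := hfin.mem_toFinset.mp hFA
    have h1 : ind (dualCone F) lam' = 0 := by
      apply ind_eq_zero
      intro h
      have := h ω hωF
      linarith
    have hiff2 : lam ∈ dualCone F ↔ μQ ∈ dualCone
        ((Submodule.span ℝ ({ω} : Set V)).mkQ '' F) := by
      constructor
      · intro h
        have hμF : μ ∈ dualCone F :=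
          cross_mu_of_lam hp hωC hDICH hμval hμω hsep hsep' ht0 ht1 hFface hωF h
        rintro y ⟨v, hv, rfl⟩
        rw [hμπ]
        exact hμF v hv
      · intro h
        have hμF : μ ∈ dualCone F := by
          intro v hv
          rw [← hμπ]
          exact h _ ⟨v, hv, rfl⟩
        exact cross_lam_of_mu hp hωC hω0 hpt hDICH hμval hμω hsep hsep' ht0 ht1
          hFface hωF hμF
    have h2 : ind (dualCone F) lam =
        ind (dualCone ((Submodule.span ℝ ({ω} : Set V)).mkQ '' F)) μQ :=
      ind_congr hiff2
    have h3 : ind (coneS S + (Submodule.span ℝ F : Set V)) x =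
        ind (((Submodule.span ℝ ({ω} : Set V)).mkQ '' coneS S) +
          (Submodule.span ℝ ((Submodule.span ℝ ({ω} : Set V)).mkQ '' F) :
            Set (V ⧸ Submodule.span ℝ ({ω} : Set V))))
          ((Submodule.span ℝ ({ω} : Set V)).mkQ x) :=
      ind_congr (mem_add_span_iff ω (Submodule.subset_span hωF) x)
    have h4 : sdim F = sdim ((Submodule.span ℝ ({ω} : Set V)).mkQ '' F) + 1 :=
      sdim_image_face ω hωF hω0
    rw [h1, h2, h3, h4, pow_succ]
    ring

end GKM
end
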